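/- arXiv:2110.15842 — 10 statements merged into one kernel-verified Lean document; each statement's English description precedes it below -/
import Mathlib

section
/- Let f(x) = |x|^2 applied entrywise. Let v_1, ..., v_n be unit vectors in C^r with Gram matrix M (so M_{ij} = <v_i, v_j>). Then 1^T f(M)^† 1 ≤ r, where f(M)^† is the Moore-Penrose pseudoinverse of the entrywise squared-modulus matrix f(M) and 1 is the all-ones vector. -/
/-!
With `c = f(M)† 1` and `s = 1ᵀ c`, consider `A = ∑ₖ cₖ vₖ vₖ*`. Its Frobenius inner product with
the identity is `∑ₖ cₖ = s`. Since `f(M)` is the Gram matrix of the `vₖ vₖ*` and `f(M)†` is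
symmetric with `f(M)† f(M) f(M)† = f(M)†`, also `‖A‖² = cᵀ f(M) c = s`. Cauchy–Schwarz against the
identity, whose squared norm is `r`, gives `s² ≤ r s`, and `s = ‖A‖² ≥ 0`, so `s ≤ r`.
-/

open Matrix
open scoped InnerProductSpace ComplexConjugate

namespace Matrix

variable {m R : Type*} [Fintype m] [CommSemiring R]

theorem transpose_eq_self_of_isMoorePenroseInverse {A P : Matrix m m R} (hA : Aᵀ = A)
    (hP1 : A * P * A = A) (hP2 : P * A * P = P)
    (hP3 : (A * P)ᵀ = A * P) (hP4 : (P * A)ᵀ = P * A) : Pᵀ = P := by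
  have hAPtA : A * Pᵀ * A = A := by
    simpa [transpose_mul, hA, Matrix.mul_assoc] using congrArg transpose hP1
  have hPtAPt : Pᵀ * A * Pᵀ = Pᵀ := by
    simpa [transpose_mul, hA, Matrix.mul_assoc] using congrArg transpose hP2
  have hAPt : A * Pᵀ = P * A := by rw [← hP4, transpose_mul, hA]
  have hPtA : Pᵀ * A = A * P := by rw [← hP3, transpose_mul, hA]
  have hcomm : A * P = P * A :=
    calc A * P = (A * Pᵀ) * (A * P) := by rw [← Matrix.mul_assoc, hAPtA]
    _ = (P * A) * (Pᵀ * A) := by rw [hAPt, hPtA]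
    _ = P * (A * Pᵀ * A) := by simp only [Matrix.mul_assoc]
    _ = P * A := by rw [hAPtA]
  calc Pᵀ = Pᵀ * A * Pᵀ := hPtAPt.symm
  _ = P * (P * A) := by rw [hPtA, hcomm, Matrix.mul_assoc, hAPt]
  _ = P := by rw [← hcomm, ← Matrix.mul_assoc, hP2]

end Matrix

section GramProjection

variable {𝕜 E ι : Type*} [RCLike 𝕜] [NormedAddCommGroup E] [InnerProductSpace 𝕜 E] [Fintype ι]

theorem one_dotProduct_mulVec_le_norm_sq {w : ι → E} {e : E} (he : ∀ k, ⟪e, w k⟫_𝕜 = 1)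
    {G P : Matrix ι ι ℝ} (hG : ∀ k l, ⟪w k, w l⟫_𝕜 = G k l)
    (hPs : Pᵀ = P) (hP : P * G * P = P) :
    1 ⬝ᵥ P *ᵥ 1 ≤ ‖e‖ ^ 2 := by
  set c := P *ᵥ 1
  set s := 1 ⬝ᵥ c
  set A : E := ∑ k, (c k : 𝕜) • w k
  have hquad : c ⬝ᵥ G *ᵥ c = s := by
    have hc : c = 1 ᵥ* P := by simpa [hPs] using (vecMul_transpose P 1).symm
    calc c ⬝ᵥ G *ᵥ c = 1 ⬝ᵥ (P * G * P) *ᵥ 1 := by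
          rw [← mulVec_mulVec, ← mulVec_mulVec, dotProduct_mulVec 1 P, ← hc]
    _ = s := by rw [hP]
  have hnormA : ‖A‖ ^ 2 = s := by
    have hgram : gram 𝕜 w = G.map (↑) := by ext k l; exact hG k l
    have hA : ⟪A, A⟫_𝕜 = ((c ⬝ᵥ G *ᵥ c : ℝ) : 𝕜) := by
      rw [← star_dotProduct_gram_mulVec, hgram]
      simp [dotProduct, mulVec]
    rw [norm_sq_eq_re_inner (𝕜 := 𝕜), hA, RCLike.ofReal_re, hquad]
  have hinner : ⟪e, A⟫_𝕜 = s := by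
    simp [A, inner_sum, inner_smul_right, he, s, one_dotProduct]
  have hs : 0 ≤ s := hnormA ▸ sq_nonneg _
  have hCS : s ^ 2 ≤ ‖e‖ ^ 2 * s := by
    calc s ^ 2 = ‖⟪e, A⟫_𝕜‖ ^ 2 := by rw [hinner, RCLike.norm_ofReal, sq_abs]
    _ ≤ (‖e‖ * ‖A‖) ^ 2 := by gcongr; exact norm_inner_le_norm e A
    _ = ‖e‖ ^ 2 * s := by rw [mul_pow, hnormA]
  nlinarith

end GramProjection

section RankOneEntries

variable {𝕜 m : Type*} [RCLike 𝕜] [Fintype m]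

/- Matrices indexed by `m` are stored as their vectors of entries, so that the inner product of
`EuclideanSpace 𝕜 (m × m)` is the Frobenius inner product `tr (A* B)`: these are `x x*` and the
identity matrix. -/
def rankOneEntries (x : EuclideanSpace 𝕜 m) : EuclideanSpace 𝕜 (m × m) :=
  WithLp.toLp 2 fun p => x p.1 * conj (x p.2)

def identityEntries [DecidableEq m] : EuclideanSpace 𝕜 (m × m) :=
  WithLp.toLp 2 fun p => if p.1 = p.2 then 1 else 0

theorem inner_rankOneEntries (x y : EuclideanSpace 𝕜 m) :
    ⟪rankOneEntries x, rankOneEntries y⟫_𝕜 = (‖⟪x, y⟫_𝕜‖ ^ 2 : ℝ) := by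
  have hxy : ⟪x, y⟫_𝕜 = ∑ a, conj (x a) * y a := by simp [PiLp.inner_apply, mul_comm]
  calc ⟪rankOneEntries x, rankOneEntries y⟫_𝕜
      = ∑ a, ∑ b, conj (x a) * y a * conj (conj (x b) * y b) := by
        simp only [rankOneEntries, PiLp.inner_apply, RCLike.inner_apply, Fintype.sum_prod_type]
        refine Finset.sum_congr rfl fun a _ => Finset.sum_congr rfl fun b _ => ?_
        simp only [map_mul, RCLike.conj_conj]
        ring
    _ = ⟪x, y⟫_𝕜 * conj ⟪x, y⟫_𝕜 := by rw [hxy, map_sum, Finset.sum_mul_sum]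
    _ = (‖⟪x, y⟫_𝕜‖ ^ 2 : ℝ) := by rw [RCLike.mul_conj]; norm_cast

theorem inner_identityEntries_rankOneEntries [DecidableEq m] (x : EuclideanSpace 𝕜 m) :
    ⟪identityEntries, rankOneEntries x⟫_𝕜 = (‖x‖ ^ 2 : ℝ) := by
  simp [identityEntries, rankOneEntries, PiLp.inner_apply, Fintype.sum_prod_type,
    EuclideanSpace.norm_sq_eq, RCLike.mul_conj]

theorem norm_identityEntries_sq [DecidableEq m] :
    ‖(identityEntries : EuclideanSpace 𝕜 (m × m))‖ ^ 2 = Fintype.card m := by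
  rw [EuclideanSpace.norm_sq_eq, Fintype.sum_prod_type]
  simp [identityEntries, apply_ite]

end RankOneEntries

/-- Projection bound: `1ᵀ f(M)† 1 ≤ r` where `f(M)` is the entrywise squared-modulus
of the Gram matrix of unit vectors in `ℂ^r`, and `P` is its Moore–Penrose pseudoinverse. -/
theorem stmt0 (r n : ℕ)
    (v : Fin n → EuclideanSpace ℂ (Fin r)) (hv : ∀ i, ‖v i‖ = 1)
    (M : Matrix (Fin n) (Fin n) ℂ) (hM : ∀ i j, M i j = inner ℂ (v i) (v j))
    (fM : Matrix (Fin n) (Fin n) ℝ) (hfM : ∀ i j, fM i j = ‖M i j‖ ^ 2)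
    (P : Matrix (Fin n) (Fin n) ℝ)
    (hP1 : fM * P * fM = fM) (hP2 : P * fM * P = P)
    (hP3 : (fM * P)ᵀ = fM * P) (hP4 : (P * fM)ᵀ = P * fM) :
    (fun _ => (1 : ℝ)) ⬝ᵥ P.mulVec (fun _ => (1 : ℝ)) ≤ (r : ℝ) := by
  have hG : ∀ i j, ⟪rankOneEntries (v i), rankOneEntries (v j)⟫_ℂ = fM i j := fun i j => by
    rw [inner_rankOneEntries, hfM, hM, RCLike.ofReal_eq_complex_ofReal]
  have he : ∀ i, ⟪identityEntries, rankOneEntries (v i)⟫_ℂ = 1 := fun i => by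
    rw [inner_identityEntries_rankOneEntries, hv, one_pow, RCLike.ofReal_one]
  have hfM_symm : fMᵀ = fM := by
    ext i j
    rw [transpose_apply, hfM, hfM, hM, hM, ← inner_conj_symm, Complex.norm_conj]
  have hP_symm := transpose_eq_self_of_isMoorePenroseInverse hfM_symm hP1 hP2 hP3 hP4
  calc 1 ⬝ᵥ P *ᵥ 1 ≤ ‖(identityEntries : EuclideanSpace ℂ (Fin r × Fin r))‖ ^ 2 :=
        one_dotProduct_mulVec_le_norm_sq he hG hP_symm hP2
  _ = r := by rw [norm_identityEntries_sq, Fintype.card_fin]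
end

section
/- Let v_1, ..., v_n be unit vectors in C^r with Gram matrix M, and let f(M) be the entrywise squared-modulus matrix. Then 1^T f(M) 1 ≥ (n^2/r)(2 − (1^T f(M)^† 1)/r). In particular, since 1^T f(M)^† 1 ≤ r, this implies the Welch bound ∑_{i,j} |<v_i,v_j>|^2 ≥ n^2/r. -/
/-!
Put `Pᵢ = vᵢ vᵢᴴ` and regard matrices as vectors of the Hilbert–Schmidt space. Then
`⟪Pᵢ, Pⱼ⟫ = |⟪vᵢ, vⱼ⟫|²`, so `f(M)` is the Gram matrix of the `Pᵢ` and
`xᵀ f(M) y = ⟪∑ xᵢ Pᵢ, ∑ yⱼ Pⱼ⟫`. Since `⟪I, Pᵢ⟫ = ‖vᵢ‖² = 1`, every `z` in the kernel of `f(M)`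
has `∑ zᵢ = ⟪I, ∑ zᵢ Pᵢ⟫ = 0`, so `1` lies in the range of `f(M)` and `y = f(M)† 1` solves
`f(M) y = 1`. Cauchy–Schwarz for the form gives `n² = (yᵀ f(M) 1)² ≤ (1ᵀ f(M)† 1)(1ᵀ f(M) 1)`, and
`t (2r - t) ≤ r²` weakens this to the stated bound. Cauchy–Schwarz against `I`, with `‖I‖² = r`,
gives the Welch bound `n² ≤ r · 1ᵀ f(M) 1`.
-/

open Matrix

theorem mulVec_mulVec_eq_self_of_dotProduct_ker_eq_zero {ι R : Type*} [Fintype ι]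
    [CommRing R] [LinearOrder R] [IsStrictOrderedRing R] {A P : Matrix ι ι R} {u : ι → R}
    (hA : Aᵀ = A) (hAPA : A * P * A = A) (hAP : (A * P)ᵀ = A * P)
    (hu : ∀ z, A *ᵥ z = 0 → u ⬝ᵥ z = 0) : A *ᵥ (P *ᵥ u) = u := by
  have hAAP : A * (A * P) = A := by
    calc A * (A * P) = A * (A * P)ᵀ := by rw [hAP]
      _ = (A * P * A)ᵀ := by rw [transpose_mul (A * P) A, hA]
      _ = A := by rw [hAPA, hA]
  set z := u - A *ᵥ (P *ᵥ u)
  have hz : A *ᵥ z = 0 := by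
    simp only [z, mulVec_sub, mulVec_mulVec, hAAP, sub_self]
  have hzz : z ⬝ᵥ z = 0 := by
    have hAPu : z ⬝ᵥ A *ᵥ (P *ᵥ u) = 0 := by
      rw [dotProduct_mulVec, ← mulVec_transpose, hA, hz, zero_dotProduct]
    rw [dotProduct_sub, hAPu, dotProduct_comm, hu z hz, sub_zero]
  exact (sub_eq_zero.mp (dotProduct_self_eq_zero.mp hzz)).symm

section RealGram

variable {𝕜 E ι : Type*} [RCLike 𝕜] [NormedAddCommGroup E] [InnerProductSpace 𝕜 E]
  {w : ι → E} {G : Matrix ι ι ℝ}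

local notation "⟪" x ", " y "⟫" => inner 𝕜 x y

theorem transpose_eq_self_of_ofReal_eq_inner (hG : ∀ i j, (G i j : 𝕜) = ⟪w i, w j⟫) :
    Gᵀ = G := by
  ext i j
  have h := hG j i
  rw [← inner_conj_symm, ← hG i j, RCLike.conj_ofReal] at h
  exact_mod_cast h

variable [Fintype ι]

theorem ofReal_dotProduct_mulVec_eq_inner (hG : ∀ i j, (G i j : 𝕜) = ⟪w i, w j⟫)
    (x y : ι → ℝ) :
    ((x ⬝ᵥ G *ᵥ y : ℝ) : 𝕜) = ⟪∑ i, (x i : 𝕜) • w i, ∑ i, (y i : 𝕜) • w i⟫ := by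
  simp only [dotProduct, mulVec, sum_inner, Finset.mul_sum]
  simp only [inner_sum, inner_smul_left, inner_smul_right, RCLike.conj_ofReal, ← hG]
  push_cast
  exact Finset.sum_congr rfl fun i _ => Finset.sum_congr rfl fun j _ => by ring

theorem dotProduct_mulVec_self_eq_norm_sq (hG : ∀ i j, (G i j : 𝕜) = ⟪w i, w j⟫) (x : ι → ℝ) :
    x ⬝ᵥ G *ᵥ x = ‖∑ i, (x i : 𝕜) • w i‖ ^ 2 := by
  have h := ofReal_dotProduct_mulVec_eq_inner hG x x
  rw [inner_self_eq_norm_sq_to_K] at h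
  exact_mod_cast h

theorem sq_dotProduct_mulVec_le (hG : ∀ i j, (G i j : 𝕜) = ⟪w i, w j⟫) (x y : ι → ℝ) :
    (x ⬝ᵥ G *ᵥ y) ^ 2 ≤ (x ⬝ᵥ G *ᵥ x) * (y ⬝ᵥ G *ᵥ y) := by
  rw [dotProduct_mulVec_self_eq_norm_sq hG, dotProduct_mulVec_self_eq_norm_sq hG, ← mul_pow,
    ← sq_abs, ← RCLike.norm_ofReal (K := 𝕜), ofReal_dotProduct_mulVec_eq_inner hG]
  exact pow_le_pow_left₀ (norm_nonneg _) (norm_inner_le_norm _ _) 2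

variable {d : E} {u : ι → ℝ}

theorem ofReal_dotProduct_eq_inner (hd : ∀ i, ⟪d, w i⟫ = (u i : 𝕜)) (x : ι → ℝ) :
    ((u ⬝ᵥ x : ℝ) : 𝕜) = ⟪d, ∑ i, (x i : 𝕜) • w i⟫ := by
  simp only [dotProduct, inner_sum, inner_smul_right, hd]
  push_cast
  exact Finset.sum_congr rfl fun i _ => mul_comm _ _

theorem dotProduct_eq_zero_of_mulVec_eq_zero (hG : ∀ i j, (G i j : 𝕜) = ⟪w i, w j⟫)
    (hd : ∀ i, ⟪d, w i⟫ = (u i : 𝕜)) {z : ι → ℝ} (hz : G *ᵥ z = 0) : u ⬝ᵥ z = 0 := by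
  have hcomb : ∑ i, (z i : 𝕜) • w i = 0 := by
    rw [← norm_eq_zero, ← sq_eq_zero_iff, ← dotProduct_mulVec_self_eq_norm_sq hG, hz,
      dotProduct_zero]
  have h := ofReal_dotProduct_eq_inner hd z
  rw [hcomb, inner_zero_right] at h
  exact_mod_cast h

theorem sq_dotProduct_le_norm_sq_mul (hG : ∀ i j, (G i j : 𝕜) = ⟪w i, w j⟫)
    (hd : ∀ i, ⟪d, w i⟫ = (u i : 𝕜)) (x : ι → ℝ) :
    (u ⬝ᵥ x) ^ 2 ≤ ‖d‖ ^ 2 * (x ⬝ᵥ G *ᵥ x) := by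
  rw [dotProduct_mulVec_self_eq_norm_sq hG, ← mul_pow, ← sq_abs, ← RCLike.norm_ofReal (K := 𝕜),
    ofReal_dotProduct_eq_inner hd]
  exact pow_le_pow_left₀ (norm_nonneg _) (norm_inner_le_norm _ _) 2

theorem sq_dotProduct_le_dotProduct_mulVec_mul (hG : ∀ i j, (G i j : 𝕜) = ⟪w i, w j⟫)
    (hd : ∀ i, ⟪d, w i⟫ = (u i : 𝕜)) {P : Matrix ι ι ℝ} (hGPG : G * P * G = G)
    (hGP : (G * P)ᵀ = G * P) (x : ι → ℝ) :
    (u ⬝ᵥ x) ^ 2 ≤ (u ⬝ᵥ P *ᵥ u) * (x ⬝ᵥ G *ᵥ x) := by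
  have hGt := transpose_eq_self_of_ofReal_eq_inner hG
  have hGy : G *ᵥ (P *ᵥ u) = u := mulVec_mulVec_eq_self_of_dotProduct_ker_eq_zero hGt hGPG hGP
    fun z hz => dotProduct_eq_zero_of_mulVec_eq_zero hG hd hz
  have hu : ∀ y, u ⬝ᵥ y = P *ᵥ u ⬝ᵥ G *ᵥ y := fun y => by
    rw [dotProduct_mulVec, ← mulVec_transpose, hGt, hGy]
  rw [hu x, hu (P *ᵥ u)]
  exact sq_dotProduct_mulVec_le hG _ x

end RealGram

theorem div_mul_two_sub_div_le {q s t r : ℝ} (hq : 0 ≤ q) (hs : 0 ≤ s) (hqts : q ≤ t * s) :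
    q / r * (2 - t / r) ≤ s := by
  simp only [div_eq_mul_inv]
  set a := r⁻¹
  -- `q (2a - t a²) ≤ s t (2a - t a²) = s (1 - (1 - t a)²)` when `2a - t a² ≥ 0`
  rcases le_or_gt (2 * a - t * a ^ 2) 0 with hneg | hpos
  · nlinarith
  · nlinarith [mul_le_mul_of_nonneg_right hqts hpos.le, sq_nonneg (1 - t * a)]

noncomputable def frobeniusVec {𝕜 ι : Type*} (A : Matrix ι ι 𝕜) : EuclideanSpace 𝕜 (ι × ι) :=
  WithLp.toLp 2 fun p => A p.1 p.2

section FrobeniusVec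

variable {𝕜 ι : Type*} [RCLike 𝕜] [Fintype ι]

open ComplexConjugate

local notation "⟪" x ", " y "⟫" => inner 𝕜 x y

theorem inner_frobeniusVec (A B : Matrix ι ι 𝕜) :
    ⟪frobeniusVec A, frobeniusVec B⟫ = ∑ a, ∑ b, conj (A a b) * B a b := by
  simp [frobeniusVec, PiLp.inner_apply, Fintype.sum_prod_type, mul_comm]

theorem inner_frobeniusVec_vecMulVec (v w : EuclideanSpace 𝕜 ι) :
    ⟪frobeniusVec (vecMulVec v.ofLp (star v.ofLp)), frobeniusVec (vecMulVec w.ofLp (star w.ofLp))⟫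
      = ((‖⟪v, w⟫‖ ^ 2 : ℝ) : 𝕜) := by
  rw [inner_frobeniusVec, RCLike.ofReal_pow, ← RCLike.mul_conj]
  simp only [vecMulVec_apply, PiLp.inner_apply, RCLike.inner_apply, map_sum, Finset.sum_mul_sum,
    Pi.star_apply, RCLike.star_def, map_mul, RCLike.conj_conj]
  exact Finset.sum_congr rfl fun a _ => Finset.sum_congr rfl fun b _ => by ring

variable [DecidableEq ι]

theorem inner_frobeniusVec_one_vecMulVec (v : EuclideanSpace 𝕜 ι) :
    ⟪frobeniusVec 1, frobeniusVec (vecMulVec v.ofLp (star v.ofLp))⟫ = ((‖v‖ ^ 2 : ℝ) : 𝕜) := by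
  rw [inner_frobeniusVec, RCLike.ofReal_pow, ← inner_self_eq_norm_sq_to_K, PiLp.inner_apply]
  simp only [one_apply, vecMulVec_apply, RCLike.inner_apply, Pi.star_apply, RCLike.star_def,
    apply_ite, map_one, map_zero, ite_mul, one_mul, zero_mul, Finset.sum_ite_eq, Finset.mem_univ,
    if_true]

theorem norm_frobeniusVec_one_sq : ‖frobeniusVec (1 : Matrix ι ι 𝕜)‖ ^ 2 = Fintype.card ι := by
  have h := inner_frobeniusVec (1 : Matrix ι ι 𝕜) 1
  rw [inner_self_eq_norm_sq_to_K] at h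
  simp only [one_apply, MonoidWithZeroHom.map_ite_one_zero, mul_ite, mul_one, mul_zero,
    Finset.sum_ite_eq, Finset.mem_univ, ↓reduceIte, Finset.sum_const, Finset.card_univ,
    nsmul_eq_mul] at h
  exact_mod_cast h

end FrobeniusVec

theorem stmt1_general (r n : ℕ)
    (v : Fin n → EuclideanSpace ℂ (Fin r)) (hv : ∀ i, ‖v i‖ = 1)
    (M : Matrix (Fin n) (Fin n) ℂ) (hM : ∀ i j, M i j = inner ℂ (v i) (v j))
    (fM : Matrix (Fin n) (Fin n) ℝ) (hfM : ∀ i j, fM i j = ‖M i j‖ ^ 2)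
    (P : Matrix (Fin n) (Fin n) ℝ)
    (hP1 : fM * P * fM = fM)
    (hP3 : (fM * P)ᵀ = fM * P) :
    (fun _ => (1 : ℝ)) ⬝ᵥ fM.mulVec (fun _ => (1 : ℝ)) ≥
      ((n : ℝ) ^ 2 / r) * (2 - ((fun _ => (1 : ℝ)) ⬝ᵥ P.mulVec (fun _ => (1 : ℝ))) / r) ∧
    ∑ i, ∑ j, ‖(inner ℂ (v i) (v j) : ℂ)‖ ^ 2 ≥ (n : ℝ) ^ 2 / r := by
  set w := fun i => frobeniusVec (vecMulVec (v i).ofLp (star (v i).ofLp))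
  have hG : ∀ i j, (fM i j : ℂ) = inner ℂ (w i) (w j) := fun i j => by
    rw [inner_frobeniusVec_vecMulVec, hfM, hM]
    rfl
  have hd : ∀ i, inner ℂ (frobeniusVec 1) (w i) = ((1 : ℝ) : ℂ) := fun i => by
    rw [inner_frobeniusVec_one_vecMulVec, hv, one_pow]
    rfl
  have hs : 0 ≤ (fun _ => (1 : ℝ)) ⬝ᵥ fM *ᵥ fun _ => 1 := by
    rw [dotProduct_mulVec_self_eq_norm_sq hG]
    positivity
  have hsum : (fun _ => (1 : ℝ)) ⬝ᵥ fM *ᵥ (fun _ => 1) = ∑ i, ∑ j, ‖inner ℂ (v i) (v j)‖ ^ 2 := by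
    simp [dotProduct, mulVec, hfM, hM]
  have hn : (fun _ => (1 : ℝ)) ⬝ᵥ (fun _ : Fin n => 1) = n := by simp [dotProduct]
  have improved := sq_dotProduct_le_dotProduct_mulVec_mul (u := fun _ => 1) hG hd hP1 hP3 fun _ => 1
  have welch := sq_dotProduct_le_norm_sq_mul (u := fun _ => 1) hG hd fun _ => 1
  rw [hn] at improved welch
  rw [norm_frobeniusVec_one_sq, Fintype.card_fin] at welch
  exact ⟨div_mul_two_sub_div_le (by positivity) hs improved,
    hsum ▸ div_le_of_le_mul₀ (by positivity) hs (by linarith)⟩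

/-- Improved Welch bound: `1ᵀ f(M) 1 ≥ (n²/r)(2 − (1ᵀ f(M)† 1)/r)`, which in particular
implies the Welch bound `∑_{i,j} |⟨v_i, v_j⟩|² ≥ n²/r`. -/
theorem stmt1 (r n : ℕ)
    (v : Fin n → EuclideanSpace ℂ (Fin r)) (hv : ∀ i, ‖v i‖ = 1)
    (M : Matrix (Fin n) (Fin n) ℂ) (hM : ∀ i j, M i j = inner ℂ (v i) (v j))
    (fM : Matrix (Fin n) (Fin n) ℝ) (hfM : ∀ i j, fM i j = ‖M i j‖ ^ 2)
    (P : Matrix (Fin n) (Fin n) ℝ)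
    (hP1 : fM * P * fM = fM) (hP2 : P * fM * P = P)
    (hP3 : (fM * P)ᵀ = fM * P) (hP4 : (P * fM)ᵀ = P * fM) :
    (fun _ => (1 : ℝ)) ⬝ᵥ fM.mulVec (fun _ => (1 : ℝ)) ≥
      ((n : ℝ) ^ 2 / r) * (2 - ((fun _ => (1 : ℝ)) ⬝ᵥ P.mulVec (fun _ => (1 : ℝ))) / r) ∧
    ∑ i, ∑ j, ‖(inner ℂ (v i) (v j) : ℂ)‖ ^ 2 ≥ (n : ℝ) ^ 2 / r :=
  stmt1_general r n v hv M hM fM hfM P hP1 hP3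
end

section
/- Let 0 < α < 1 and let v_1, ..., v_n be unit vectors in R^r with |<v_i, v_j>| = α for all i ≠ j. Let M be their Gram matrix and f(x) = x^2 applied entrywise. Then for all x, y ∈ R^n: ((1−α^2)/2)(<x, Mx><y, My> + <x, My>^2) + (α^2/(α^2 n + 1 − α^2)) <Mx, My>^2 ≥ <f(Mx), f(My)>, where f(z) denotes the vector with entries z_i^2. -/
/-!
In `E ⊗ E` the vectors `eᵢ = vᵢ ⊗ vᵢ` have Gram matrix `(1 - α²) I + α² J`, and the symmetric
tensor `t = X ⊗ Y + Y ⊗ X`, with `X = ∑ xⱼ vⱼ` and `Y = ∑ yⱼ vⱼ`, satisfies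
`⟪t, eᵢ⟫ = 2 (Mx)ᵢ (My)ᵢ` and `‖t‖² = 2 (⟪x, Mx⟫⟪y, My⟫ + ⟪x, My⟫²)`. Bessel's inequality for the
projection of `t` onto the span of the `eᵢ`, computed with the explicit inverse of that Gram
matrix, is the claimed inequality.
-/

open Matrix Finset
open scoped RealInnerProductSpace TensorProduct

section InnerProductSpace

variable {F : Type*} [NormedAddCommGroup F] [InnerProductSpace ℝ F] {ι : Type*} [Fintype ι]

theorem sum_mul_inner_le_norm_sq (t : F) (e : ι → F) (c : ι → ℝ)
    (hc : ∀ i, ⟪∑ j, c j • e j, e i⟫ = ⟪t, e i⟫) :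
    ∑ i, c i * ⟪t, e i⟫ ≤ ‖t‖ ^ 2 := by
  set s := ∑ j, c j • e j
  have inner_s (u : F) : ⟪u, s⟫ = ∑ i, c i * ⟪u, e i⟫ := by
    simp only [s, inner_sum, real_inner_smul_right]
  -- `hc` makes `t - s` orthogonal to every `e i`, hence to `s`
  have hss : ‖s‖ ^ 2 = ⟪t, s⟫ := by
    rw [← real_inner_self_eq_norm_sq, inner_s, inner_s]
    simp only [hc]
  rw [← inner_s]
  nlinarith [norm_sub_sq_real t s, sq_nonneg ‖t - s‖]

theorem inner_sum_smul_of_inner_eq {e : ι → F} {β : ℝ} (he : ∀ i, ⟪e i, e i⟫ = 1)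
    (hβ : ∀ i j, i ≠ j → ⟪e i, e j⟫ = β) (c : ι → ℝ) (i : ι) :
    ⟪∑ j, c j • e j, e i⟫ = β * ∑ j, c j + (1 - β) * c i := by
  classical
  rw [sum_inner, ← add_sum_erase _ _ (mem_univ i), ← add_sum_erase _ c (mem_univ i),
    real_inner_smul_left, he, sum_congr rfl fun j hj => by
      rw [real_inner_smul_left, hβ j i (ne_of_mem_erase hj)], ← sum_mul]
  ring

theorem sum_inner_sq_sub_le_of_inner_eq {e : ι → F} {β : ℝ} (he : ∀ i, ⟪e i, e i⟫ = 1)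
    (hβ : ∀ i j, i ≠ j → ⟪e i, e j⟫ = β) (hβ1 : β < 1)
    (hd : β * Fintype.card ι + 1 - β ≠ 0) (t : F) :
    ∑ i, ⟪t, e i⟫ ^ 2 - β / (β * Fintype.card ι + 1 - β) * (∑ i, ⟪t, e i⟫) ^ 2
      ≤ (1 - β) * ‖t‖ ^ 2 := by
  set n : ℝ := (Fintype.card ι : ℝ)
  set p := fun i => ⟪t, e i⟫
  set S := ∑ i, p i
  obtain ⟨k, hk_def⟩ : ∃ k, k = β / (β * n + 1 - β) * S := ⟨_, rfl⟩
  have hk : β * (S - n * k) = (1 - β) * k := by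
    rw [hk_def]
    field_simp
    ring
  have hβ1' : 1 - β ≠ 0 := by linarith
  -- `c` solves `(β J + (1 - β) I) c = p`, the Gram system of the `e i`
  set c := fun i => (p i - k) / (1 - β)
  have hc : ∀ i, ⟪∑ j, c j • e j, e i⟫ = p i := by
    intro i
    have hc_sum : ∑ i, c i = (S - n * k) / (1 - β) := by
      simp only [c, ← sum_div, sum_sub_distrib, sum_const, card_univ, nsmul_eq_mul]
      rfl
    rw [inner_sum_smul_of_inner_eq he hβ, hc_sum]
    simp only [c]
    field_simp
    linear_combination hk
  have hcp : ∑ i, c i * p i = (∑ i, p i ^ 2 - k * S) / (1 - β) := by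
    simp only [c, S, sum_div, mul_sum, ← sum_sub_distrib]
    exact sum_congr rfl fun i _ => by ring
  have key := sum_mul_inner_le_norm_sq t e c hc
  rw [hcp, div_le_iff₀ (by linarith), hk_def] at key
  linear_combination key

end InnerProductSpace

section Tensor

variable {E : Type*} [NormedAddCommGroup E] [InnerProductSpace ℝ E]

theorem norm_tmul_add_tmul_sq (x y : E) :
    ‖x ⊗ₜ[ℝ] y + y ⊗ₜ[ℝ] x‖ ^ 2 = 2 * (‖x‖ ^ 2 * ‖y‖ ^ 2 + ⟪x, y⟫ ^ 2) := by
  rw [← real_inner_self_eq_norm_sq]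
  simp only [inner_add_left, inner_add_right, TensorProduct.inner_tmul,
    real_inner_self_eq_norm_sq, real_inner_comm x y]
  ring

theorem inner_tmul_add_tmul_tmul_self (x y v : E) :
    ⟪x ⊗ₜ[ℝ] y + y ⊗ₜ[ℝ] x, v ⊗ₜ[ℝ] v⟫ = 2 * (⟪v, x⟫ * ⟪v, y⟫) := by
  simp only [inner_add_left, TensorProduct.inner_tmul, real_inner_comm v]
  ring

end Tensor

section Gram

variable {E : Type*} [NormedAddCommGroup E] [InnerProductSpace ℝ E] {ι : Type*} [Fintype ι]

theorem gram_mulVec_apply (v : ι → E) (x : ι → ℝ) (i : ι) :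
    (gram ℝ v *ᵥ x) i = ⟪v i, ∑ j, x j • v j⟫ := by
  simp only [mulVec, dotProduct, gram_apply, inner_sum, real_inner_smul_right, mul_comm]

theorem dotProduct_gram_mulVec (v : ι → E) (x y : ι → ℝ) :
    x ⬝ᵥ gram ℝ v *ᵥ y = ⟪∑ i, x i • v i, ∑ i, y i • v i⟫ := by
  rw [← star_dotProduct_gram_mulVec, star_trivial]

end Gram

/-- Geometric inequality for spherical `{α, −α}`-codes in `ℝ^r`. -/
theorem stmt2 (r n : ℕ) (α : ℝ) (hα0 : 0 < α) (hα1 : α < 1)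
    (v : Fin n → EuclideanSpace ℝ (Fin r)) (hv : ∀ i, ‖v i‖ = 1)
    (hangle : ∀ i j, i ≠ j → |(inner ℝ (v i) (v j) : ℝ)| = α)
    (M : Matrix (Fin n) (Fin n) ℝ) (hM : ∀ i j, M i j = inner ℝ (v i) (v j))
    (x y : Fin n → ℝ) :
    (1 - α ^ 2) / 2 * ((x ⬝ᵥ M.mulVec x) * (y ⬝ᵥ M.mulVec y) + (x ⬝ᵥ M.mulVec y) ^ 2)
      + α ^ 2 / (α ^ 2 * n + 1 - α ^ 2) * (M.mulVec x ⬝ᵥ M.mulVec y) ^ 2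
      ≥ ∑ i, (M.mulVec x i) ^ 2 * (M.mulVec y i) ^ 2 := by
  obtain rfl : M = gram ℝ v := Matrix.ext hM
  set X := ∑ j, x j • v j
  set Y := ∑ j, y j • v j
  have hβ1 : α ^ 2 < 1 := by nlinarith
  have hd : 0 < α ^ 2 * n + 1 - α ^ 2 := by
    have : 0 ≤ α ^ 2 * n := by positivity
    linarith
  have key := sum_inner_sq_sub_le_of_inner_eq (e := fun i => v i ⊗ₜ[ℝ] v i) (β := α ^ 2)
    (fun i => by simp [hv]) (fun i j hij => by simp [← sq, ← sq_abs, hangle i j hij]) hβ1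
    (by simpa using hd.ne') (X ⊗ₜ[ℝ] Y + Y ⊗ₜ[ℝ] X)
  simp only [inner_tmul_add_tmul_tmul_self, norm_tmul_add_tmul_sq, Fintype.card_fin, mul_pow,
    ← mul_sum] at key
  rw [dotProduct_gram_mulVec v x x, dotProduct_gram_mulVec v y y, dotProduct_gram_mulVec v x y,
    real_inner_self_eq_norm_sq, real_inner_self_eq_norm_sq]
  simp only [dotProduct, gram_mulVec_apply]
  linear_combination key / 4
end

section
/- Let 0 < α < 1, let C be a spherical {α, −α}-code of size n in R^r with Gram matrix M. If x, y ∈ R^n are orthogonal unit eigenvectors of M with nonzero eigenvalues λ and μ respectively, then ∑_{i=1}^n x_i^2 y_i^2 ≤ (1 − α^2)/(2λμ). -/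
/-!
Put `b = ∑ xᵢ vᵢ`, `c = ∑ yᵢ vᵢ`, `S = ∑ xᵢ² yᵢ²` and `T = ∑ xᵢ yᵢ vᵢ ⊗ vᵢ`. The eigenvector
equations say `⟪vᵢ, b⟫ = λ xᵢ` and `⟪vᵢ, c⟫ = μ yᵢ`, so `‖b‖² = λ`, `‖c‖² = μ`, `b ⊥ c` and
`⟪T, b ⊗ c⟫ = ⟪T, c ⊗ b⟫ = λ μ S`. Cauchy–Schwarz against `b ⊗ c + c ⊗ b`, whose squared norm is
`2 λ μ`, gives `2 λ μ S² ≤ ‖T‖²`. On the other hand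
`‖T‖² = ∑ᵢⱼ xᵢ yᵢ xⱼ yⱼ ⟪vᵢ, vⱼ⟫² = (1 - α²) S + α² (x ⬝ y)² = (1 - α²) S`.
-/

open Matrix
open scoped TensorProduct RealInnerProductSpace

variable {ι E : Type*} [Fintype ι] [NormedAddCommGroup E] [InnerProductSpace ℝ E]

section GramEigenvector

variable (v : ι → E) {x y : ι → ℝ} {lam mu : ℝ}

lemma inner_sum_smul_of_gram_mulVec_eq_smul (hx : gram ℝ v *ᵥ x = lam • x) (i : ι) :
    ⟪v i, ∑ j, x j • v j⟫ = lam * x i := by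
  simpa [mulVec, dotProduct, gram_apply, inner_sum, inner_smul_right, mul_comm] using
    congrFun hx i

lemma inner_sum_smul_sum_smul_of_gram_mulVec_eq_smul (hy : gram ℝ v *ᵥ y = mu • y) :
    ⟪∑ i, x i • v i, ∑ i, y i • v i⟫ = mu * (x ⬝ᵥ y) := by
  rw [← star_dotProduct_gram_mulVec, hy, star_trivial, dotProduct_smul, smul_eq_mul]

lemma nonneg_of_gram_mulVec_eq_smul (hx : gram ℝ v *ᵥ x = lam • x) (hx0 : x ≠ 0) : 0 ≤ lam := by
  have h := (posSemidef_gram ℝ v).dotProduct_mulVec_nonneg x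
  rw [hx, star_trivial, dotProduct_smul, smul_eq_mul] at h
  exact nonneg_of_mul_nonneg_left h (by simpa using dotProduct_self_star_pos_iff.2 hx0)

end GramEigenvector

lemma inner_sum_smul_tmul_self_tmul (v : ι → E) (d : ι → ℝ) (b c : E) :
    ⟪∑ i, (d i • v i) ⊗ₜ[ℝ] v i, b ⊗ₜ[ℝ] c⟫ = ∑ i, d i * (⟪v i, b⟫ * ⟪v i, c⟫) := by
  simp only [sum_inner, TensorProduct.inner_tmul, real_inner_smul_left, mul_assoc]

lemma norm_sq_sum_smul_tmul_self (v : ι → E) (d : ι → ℝ) :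
    ‖∑ i, (d i • v i) ⊗ₜ[ℝ] v i‖ ^ 2 = ∑ i, ∑ j, d i * d j * gram ℝ v i j ^ 2 := by
  rw [← real_inner_self_eq_norm_sq]
  simp only [sum_inner, inner_sum, real_inner_smul_left, real_inner_smul_right,
    TensorProduct.inner_tmul, gram_apply, sq]
  exact Finset.sum_congr rfl fun i _ => Finset.sum_congr rfl fun j _ => by
    rw [real_inner_comm (v i) (v j)]; ring

lemma sq_inner_tmul_add_inner_tmul_le (T : E ⊗[ℝ] E) {b c : E} (hbc : ⟪b, c⟫ = 0) :
    (⟪T, b ⊗ₜ[ℝ] c⟫ + ⟪T, c ⊗ₜ[ℝ] b⟫) ^ 2 ≤ 2 * ‖T‖ ^ 2 * (‖b‖ ^ 2 * ‖c‖ ^ 2) := by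
  have hsym : ‖b ⊗ₜ[ℝ] c + c ⊗ₜ[ℝ] b‖ ^ 2 = 2 * (‖b‖ ^ 2 * ‖c‖ ^ 2) := by
    rw [norm_add_sq_real]
    simp only [TensorProduct.norm_tmul, TensorProduct.inner_tmul, hbc, real_inner_comm, mul_zero,
      add_zero]
    ring
  calc (⟪T, b ⊗ₜ[ℝ] c⟫ + ⟪T, c ⊗ₜ[ℝ] b⟫) ^ 2 = ⟪T, b ⊗ₜ[ℝ] c + c ⊗ₜ[ℝ] b⟫ ^ 2 := by
        rw [inner_add_right]
    _ ≤ (‖T‖ * ‖b ⊗ₜ[ℝ] c + c ⊗ₜ[ℝ] b‖) ^ 2 := by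
      rw [← sq_abs]; gcongr; exact abs_real_inner_le_norm T _
    _ = 2 * ‖T‖ ^ 2 * (‖b‖ ^ 2 * ‖c‖ ^ 2) := by rw [mul_pow, hsym]; ring

lemma sum_sum_mul_mul_sq_eq_of_offDiag_sq_eq (G : Matrix ι ι ℝ) {α : ℝ} (hdiag : ∀ i, G i i = 1)
    (hoff : ∀ i j, i ≠ j → G i j ^ 2 = α ^ 2) (d : ι → ℝ) :
    ∑ i, ∑ j, d i * d j * G i j ^ 2 = (1 - α ^ 2) * ∑ i, d i ^ 2 + α ^ 2 * (∑ i, d i) ^ 2 := by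
  classical
  have hG : ∀ i j, G i j ^ 2 = α ^ 2 + (1 - α ^ 2) * if i = j then 1 else 0 := by
    intro i j
    split_ifs with h
    · rw [h, hdiag]; ring
    · rw [hoff i j h]; ring
  have hconst : ∑ i, ∑ j, d i * d j * α ^ 2 = α ^ 2 * (∑ i, d i) ^ 2 := by
    rw [sq (∑ i, d i), Finset.sum_mul_sum, Finset.mul_sum]
    refine Finset.sum_congr rfl fun i _ => ?_
    rw [Finset.mul_sum]
    exact Finset.sum_congr rfl fun j _ => by ring
  have hdelta : ∑ i, ∑ j, d i * d j * ((1 - α ^ 2) * if i = j then 1 else 0)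
      = (1 - α ^ 2) * ∑ i, d i ^ 2 := by
    simp only [mul_ite, mul_one, mul_zero, Finset.sum_ite_eq, Finset.mem_univ, if_true,
      Finset.mul_sum]
    exact Finset.sum_congr rfl fun i _ => by ring
  simp only [hG, mul_add, Finset.sum_add_distrib, hconst, hdelta]
  ring

lemma le_div_of_mul_sq_le_mul {a c s : ℝ} (ha : 0 < a) (hc : 0 ≤ c) (h : a * s ^ 2 ≤ c * s) :
    s ≤ c / a := by
  rw [le_div_iff₀ ha]
  nlinarith

lemma two_mul_mul_mul_sq_le_norm_sq (v : ι → E) {x y : ι → ℝ} {lam mu : ℝ}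
    (hx : gram ℝ v *ᵥ x = lam • x) (hy : gram ℝ v *ᵥ y = mu • y)
    (hxu : x ⬝ᵥ x = 1) (hyu : y ⬝ᵥ y = 1) (hxy : x ⬝ᵥ y = 0) :
    2 * lam * mu * (∑ i, x i ^ 2 * y i ^ 2) ^ 2 ≤ ‖∑ i, ((x i * y i) • v i) ⊗ₜ[ℝ] v i‖ ^ 2 := by
  set S := ∑ i, x i ^ 2 * y i ^ 2
  set T := ∑ i, ((x i * y i) • v i) ⊗ₜ[ℝ] v i
  set b := ∑ i, x i • v i
  set c := ∑ i, y i • v i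
  have hbb : ‖b‖ ^ 2 = lam := by
    rw [← real_inner_self_eq_norm_sq, inner_sum_smul_sum_smul_of_gram_mulVec_eq_smul v hx, hxu,
      mul_one]
  have hcc : ‖c‖ ^ 2 = mu := by
    rw [← real_inner_self_eq_norm_sq, inner_sum_smul_sum_smul_of_gram_mulVec_eq_smul v hy, hyu,
      mul_one]
  have hbc : ⟪b, c⟫ = 0 := by
    rw [inner_sum_smul_sum_smul_of_gram_mulVec_eq_smul v hy, hxy, mul_zero]
  have hTbc : ⟪T, b ⊗ₜ[ℝ] c⟫ = lam * mu * S := by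
    simp only [T, inner_sum_smul_tmul_self_tmul, b, c, inner_sum_smul_of_gram_mulVec_eq_smul v hx,
      inner_sum_smul_of_gram_mulVec_eq_smul v hy, S, Finset.mul_sum]
    exact Finset.sum_congr rfl fun i _ => by ring
  have hTcb : ⟪T, c ⊗ₜ[ℝ] b⟫ = lam * mu * S := by
    simp only [T, inner_sum_smul_tmul_self_tmul, b, c, inner_sum_smul_of_gram_mulVec_eq_smul v hx,
      inner_sum_smul_of_gram_mulVec_eq_smul v hy, S, Finset.mul_sum]
    exact Finset.sum_congr rfl fun i _ => by ring
  have hCS := sq_inner_tmul_add_inner_tmul_le T hbc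
  rw [hTbc, hTcb, hbb, hcc] at hCS
  have hlm : 0 ≤ lam * mu := by rw [← hbb, ← hcc]; positivity
  nlinarith

/-- Eigenvector inequality for spherical `{α, −α}`-codes: for orthogonal unit eigenvectors
`x, y` of the Gram matrix with nonzero eigenvalues `lam, mu`,
`∑ x_i² y_i² ≤ (1 − α²)/(2 lam mu)`. -/
theorem stmt4 (r n : ℕ) (α : ℝ) (hα0 : 0 < α) (hα1 : α < 1)
    (v : Fin n → EuclideanSpace ℝ (Fin r)) (hv : ∀ i, ‖v i‖ = 1)
    (hangle : ∀ i j, i ≠ j → |(inner ℝ (v i) (v j) : ℝ)| = α)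
    (M : Matrix (Fin n) (Fin n) ℝ) (hM : ∀ i j, M i j = inner ℝ (v i) (v j))
    (x y : Fin n → ℝ) (lam mu : ℝ) (hlam : lam ≠ 0) (hmu : mu ≠ 0)
    (hx : M.mulVec x = lam • x) (hy : M.mulVec y = mu • y)
    (hxu : x ⬝ᵥ x = 1) (hyu : y ⬝ᵥ y = 1) (hxy : x ⬝ᵥ y = 0) :
    ∑ i, x i ^ 2 * y i ^ 2 ≤ (1 - α ^ 2) / (2 * lam * mu) := by
  obtain rfl : M = gram ℝ v := Matrix.ext hM
  have hdiag : ∀ i, gram ℝ v i i = 1 := fun i => by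
    rw [gram_apply, real_inner_self_eq_norm_sq, hv i, one_pow]
  have hoff : ∀ i j, i ≠ j → gram ℝ v i j ^ 2 = α ^ 2 := fun i j hij => by
    rw [gram_apply, ← sq_abs, hangle i j hij]
  have hnorm : ‖∑ i, ((x i * y i) • v i) ⊗ₜ[ℝ] v i‖ ^ 2 = (1 - α ^ 2) * ∑ i, x i ^ 2 * y i ^ 2 := by
    rw [norm_sq_sum_smul_tmul_self, sum_sum_mul_mul_sq_eq_of_offDiag_sq_eq _ hdiag hoff,
      ← dotProduct, hxy]
    simp [mul_pow]
  have hlam_pos : 0 < lam :=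
    (nonneg_of_gram_mulVec_eq_smul v hx (by rintro rfl; simp at hxu)).lt_of_ne' hlam
  have hmu_pos : 0 < mu :=
    (nonneg_of_gram_mulVec_eq_smul v hy (by rintro rfl; simp at hyu)).lt_of_ne' hmu
  refine le_div_of_mul_sq_le_mul (by positivity) (by nlinarith) ?_
  rw [← hnorm]
  exact two_mul_mul_mul_sq_le_norm_sq v hx hy hxu hyu hxy
end

section
/- Let 0 < α < 1 and let M be the Gram matrix of a spherical {α, −α}-code of size n in R^r. Then n < (λ_1(M)/α)·√r. -/
/-!
The Gram matrix `M` is positive semidefinite of rank at most `r`, with unit diagonal and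
off-diagonal entries `±α`. Hence `tr(M²) = n²α² + n(1 - α²) > α²n²`, while
`tr(M²) = ∑ λᵢ² ≤ rank M · λ₁² ≤ r λ₁²`, since only `rank M` eigenvalues are nonzero and all lie
in `[0, λ₁]`.
-/

open Matrix Unitary

namespace Matrix

section Hermitian

variable {𝕜 n : Type*} [RCLike 𝕜] [Fintype n] [DecidableEq n] {A : Matrix n n 𝕜}

theorem IsHermitian.trace_sq_eq_sum_eigenvalues_sq (hA : A.IsHermitian) :
    (A ^ 2).trace = ∑ i, ((hA.eigenvalues i ^ 2 : ℝ) : 𝕜) := by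
  conv_lhs => rw [sq, hA.spectral_theorem, ← map_mul, conjStarAlgAut_apply, trace_mul_cycle,
    coe_star_mul_self, one_mul, diagonal_mul_diagonal, trace_diagonal]
  simp [sq]

theorem IsHermitian.sum_eigenvalues_sq_le (hA : A.IsHermitian) {c : ℝ}
    (hc : ∀ i, |hA.eigenvalues i| ≤ c) : ∑ i, hA.eigenvalues i ^ 2 ≤ A.rank * c ^ 2 := by
  rw [hA.rank_eq_card_non_zero_eigs, Fintype.card_subtype, ← nsmul_eq_mul,
    ← Finset.sum_filter_of_ne fun i _ h ↦ by simpa using h]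
  exact Finset.sum_le_card_nsmul _ _ _ fun i _ ↦
    (sq_abs _).symm.trans_le (pow_le_pow_left₀ (abs_nonneg _) (hc i) 2)

end Hermitian

theorem rank_gram_le_finrank {𝕜 E n : Type*} [RCLike 𝕜] [NormedAddCommGroup E]
    [InnerProductSpace 𝕜 E] [FiniteDimensional 𝕜 E] [Fintype n] (v : n → E) :
    (gram 𝕜 v).rank ≤ Module.finrank 𝕜 E := by
  rw [gram_eq_conjTranspose_mul (stdOrthonormalBasis 𝕜 E)]
  exact (rank_mul_le_right _ _).trans ((rank_le_card_height _).trans (by simp))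

theorem trace_sq_of_diag_eq_one_of_abs_eq {ι : Type*} [Fintype ι] [DecidableEq ι]
    {M : Matrix ι ι ℝ} {α : ℝ} (hM : M.IsSymm) (hdiag : ∀ i, M i i = 1)
    (hoff : ∀ i j, i ≠ j → |M i j| = α) :
    (M ^ 2).trace = Fintype.card ι ^ 2 * α ^ 2 + Fintype.card ι * (1 - α ^ 2) := by
  have hentry : ∀ i j, M i j * M j i = α ^ 2 + (1 - α ^ 2) * if i = j then 1 else 0 := by
    intro i j
    rw [hM.apply i j, ← sq, ← sq_abs]
    split_ifs with h
    · subst h; simp [hdiag]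
    · rw [hoff i j h]; ring
  simp only [trace, diag_apply, sq, mul_apply, hentry, Finset.sum_add_distrib, ← Finset.mul_sum,
    Finset.sum_ite_eq, Finset.mem_univ, if_true, Finset.sum_const, Finset.card_univ, nsmul_eq_mul]
  ring

end Matrix

/-- For a spherical `{α, −α}`-code of size `n ≥ 1` in `ℝ^r` with Gram matrix `M`,
`n < (λ₁(M)/α)·√r`. -/
theorem stmt7 (r n : ℕ) (hn : 0 < n) (α : ℝ) (hα0 : 0 < α) (hα1 : α < 1)
    (v : Fin n → EuclideanSpace ℝ (Fin r)) (hv : ∀ i, ‖v i‖ = 1)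
    (hangle : ∀ i j, i ≠ j → |(inner ℝ (v i) (v j) : ℝ)| = α)
    (M : Matrix (Fin n) (Fin n) ℝ) (hMdef : ∀ i j, M i j = inner ℝ (v i) (v j))
    (hM : M.IsHermitian) (lam1 : ℝ) (hlam1 : lam1 = ⨆ i, hM.eigenvalues i) :
    (n : ℝ) < lam1 / α * Real.sqrt r := by
  obtain rfl : M = gram ℝ v := Matrix.ext hMdef
  have hpsd := posSemidef_gram ℝ v
  have heig : ∀ i, 0 ≤ hM.eigenvalues i ∧ hM.eigenvalues i ≤ lam1 := fun i ↦
    ⟨hpsd.eigenvalues_nonneg i, hlam1 ▸ le_ciSup (Set.finite_range _).bddAbove i⟩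
  have hrank : (gram ℝ v).rank ≤ r := by
    simpa using rank_gram_le_finrank (𝕜 := ℝ) v
  have htrace := trace_sq_of_diag_eq_one_of_abs_eq (isHermitian_iff_isSymm.mp hM)
    (fun i ↦ by simp [gram_apply, hv]) hangle
  have hsum : ∑ i, hM.eigenvalues i ^ 2 ≤ r * lam1 ^ 2 :=
    (hM.sum_eigenvalues_sq_le fun i ↦ (abs_of_nonneg (heig i).1).trans_le (heig i).2).trans
      (by gcongr)
  rw [hM.trace_sq_eq_sum_eigenvalues_sq] at htrace
  simp only [RCLike.ofReal_real_eq_id, id, Fintype.card_fin] at htrace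
  have hlam1_nonneg : 0 ≤ lam1 := (heig ⟨0, hn⟩).1.trans (heig ⟨0, hn⟩).2
  have hkey : α * n < lam1 * √r := by
    rw [← Real.sqrt_sq hlam1_nonneg, ← Real.sqrt_mul (sq_nonneg _), Real.lt_sqrt (by positivity)]
    have hgap : (0 : ℝ) < n * (1 - α ^ 2) := mul_pos (by exact_mod_cast hn) (by nlinarith)
    nlinarith
  rwa [div_mul_eq_mul_div, lt_div_iff₀ hα0, mul_comm]
end

section
/- Let 0 < α < 1 and let C be a spherical {α, −α}-code of size n in R^r. Let G be the graph on vertex set C with edges between pairs of vectors with inner product −α, and let d̄ be its average degree. Then n ≤ (1 + (2α/(1−α))^2 · d̄)(r + 1). -/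
/-!
Let `M` be the Gram matrix of the code and `J` the all-ones matrix. Then `B = M - αJ` has
diagonal `1 - α`, entries `-2α` on the edges of `G` and `0` elsewhere, and rank at most `r + 1`
since `rank M ≤ r` and `rank J = 1`. Hence `tr B = n(1 - α)` and `tr B² = n(1 - α)² + 4α²·n·d̄`,
and Cauchy–Schwarz on the nonzero eigenvalues, `(tr B)² ≤ rank B · tr B²`, rearranges to the bound.
-/

open Matrix Finset Module

theorem Finset.sq_sum_le_card_filter_ne_zero_mul_sum_sq {ι R : Type*} [Fintype ι] [Field R]
    [LinearOrder R] [IsStrictOrderedRing R] (f : ι → R) :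
    (∑ i, f i) ^ 2 ≤ #{i | f i ≠ 0} * ∑ i, f i ^ 2 := by
  rw [← sum_filter_ne_zero, ← sum_filter_of_ne (p := fun i => f i ≠ 0) (f := fun i => f i ^ 2)
    fun _ _ h h0 => h (by simp [h0])]
  exact sq_sum_le_card_mul_sum_sq

theorem Matrix.rank_add_le {m n K : Type*} [Fintype n] [Field K] (A B : Matrix m n K) :
    (A + B).rank ≤ A.rank + B.rank := by
  unfold Matrix.rank
  rw [mulVecLin_add]
  exact (Submodule.finrank_mono (LinearMap.range_add_le _ _)).trans
    (Submodule.finrank_add_le_finrank_add_finrank _ _)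

theorem Matrix.rank_of_const_le_one {m n K : Type*} [Fintype n] [Field K] (c : K) :
    (of fun (_ : m) (_ : n) => c).rank ≤ 1 := by
  convert rank_vecMulVec_le (fun _ : m => c) (fun _ : n => (1 : K))
  ext; simp [vecMulVec]

theorem Matrix.rank_gram_le {n 𝕜 E : Type*} [Fintype n] [RCLike 𝕜] [NormedAddCommGroup E]
    [InnerProductSpace 𝕜 E] [FiniteDimensional 𝕜 E] (v : n → E) :
    (gram 𝕜 v).rank ≤ finrank 𝕜 E := by
  rw [gram_eq_conjTranspose_mul (stdOrthonormalBasis 𝕜 E)]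
  exact (rank_mul_le_left _ _).trans ((rank_le_card_width _).trans (by simp))

theorem Matrix.IsHermitian.trace_sq_le_rank_mul_trace_mul_self {n : Type*} [Fintype n]
    {A : Matrix n n ℝ} (hA : A.IsHermitian) : A.trace ^ 2 ≤ A.rank * (A * A).trace := by
  classical
  set U : Matrix n n ℝ := (hA.eigenvectorUnitary : Matrix n n ℝ)
  set D : Matrix n n ℝ := diagonal hA.eigenvalues
  have hUU : star U * U = 1 := Unitary.coe_star_mul_self _
  have htrace_conj (M : Matrix n n ℝ) : (U * M * star U).trace = M.trace := by
    rw [trace_mul_cycle, hUU, one_mul]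
  have hA_eq : A = U * D * star U := by
    simpa [D] using hA.spectral_theorem
  have htrace : A.trace = D.trace := by rw [hA_eq, htrace_conj]
  have htrace_sq : (A * A).trace = (D * D).trace := by
    rw [hA_eq, ← htrace_conj (D * D)]
    simp only [Matrix.mul_assoc]
    rw [← Matrix.mul_assoc (star U), hUU, Matrix.one_mul]
  rw [htrace, htrace_sq, hA.rank_eq_card_non_zero_eigs, Fintype.card_subtype,
    diagonal_mul_diagonal, trace_diagonal, trace_diagonal]
  simpa [sq] using sq_sum_le_card_filter_ne_zero_mul_sum_sq hA.eigenvalues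

section ShiftedGram

variable {ι E : Type*} [NormedAddCommGroup E] [InnerProductSpace ℝ E] (v : ι → E) (α : ℝ)

noncomputable def shiftedGram : Matrix ι ι ℝ := gram ℝ v - of fun _ _ => α

theorem shiftedGram_apply (i j : ι) : shiftedGram v α i j = inner ℝ (v i) (v j) - α := rfl

theorem isHermitian_shiftedGram : (shiftedGram v α).IsHermitian :=
  (isHermitian_gram ℝ v).sub (by ext; simp)

theorem rank_shiftedGram_le [Fintype ι] [FiniteDimensional ℝ E] :
    (shiftedGram v α).rank ≤ finrank ℝ E + 1 := by
  have : shiftedGram v α = gram ℝ v + of fun _ _ => -α := by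
    ext; simp [shiftedGram_apply, gram_apply, sub_eq_add_neg]
  rw [this]
  exact (rank_add_le _ _).trans (add_le_add (rank_gram_le v) (rank_of_const_le_one _))

variable {v α}

theorem shiftedGram_apply_self (hv : ∀ i, ‖v i‖ = 1) (i : ι) : shiftedGram v α i i = 1 - α := by
  simp [shiftedGram_apply, hv]

theorem sq_shiftedGram_apply {i j : ι} (hij : |inner ℝ (v i) (v j)| = α) :
    shiftedGram v α i j ^ 2 = if inner ℝ (v i) (v j) = -α then 4 * α ^ 2 else 0 := by
  rw [shiftedGram_apply]
  rcases eq_or_eq_neg_of_abs_eq hij with h | h <;> rw [h]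
  · split_ifs <;> nlinarith
  · rw [if_pos rfl]; ring

variable [Fintype ι]

theorem trace_shiftedGram (hv : ∀ i, ‖v i‖ = 1) :
    (shiftedGram v α).trace = Fintype.card ι * (1 - α) := by
  simp [trace, shiftedGram_apply_self hv, mul_sub]

theorem trace_shiftedGram_mul_self (hv : ∀ i, ‖v i‖ = 1)
    (hangle : ∀ i j, i ≠ j → |inner ℝ (v i) (v j)| = α) :
    (shiftedGram v α * shiftedGram v α).trace =
      Fintype.card ι * (1 - α) ^ 2 +
        4 * α ^ 2 * ∑ i, ({j | j ≠ i ∧ inner ℝ (v i) (v j) = -α}.ncard : ℝ) := by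
  classical
  have hrow (i : ι) : ∑ j, shiftedGram v α i j * shiftedGram v α j i =
      (1 - α) ^ 2 + 4 * α ^ 2 * ({j | j ≠ i ∧ inner ℝ (v i) (v j) = -α}.ncard : ℝ) := by
    have hsymm (j : ι) : shiftedGram v α j i = shiftedGram v α i j := by
      simp only [shiftedGram_apply, real_inner_comm]
    have hcard : ({j | j ≠ i ∧ inner ℝ (v i) (v j) = -α}.ncard : ℝ) =
        #{j ∈ univ.erase i | inner ℝ (v i) (v j) = -α} := by
      rw [Set.ncard_eq_toFinset_card']; congr 2; ext; simp
    simp_rw [hsymm, ← sq]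
    rw [← add_sum_erase _ _ (mem_univ i), shiftedGram_apply_self hv,
      sum_congr rfl fun j hj => sq_shiftedGram_apply (hangle i j (ne_of_mem_erase hj).symm),
      sum_ite, sum_const_zero, sum_const, nsmul_eq_mul, hcard]
    ring
  simp only [trace, diag_apply, mul_apply, hrow, sum_add_distrib, ← mul_sum]
  simp

end ShiftedGram

theorem stmt12_general (r n : ℕ) (α : ℝ) (hα1 : α < 1)
    (v : Fin n → EuclideanSpace ℝ (Fin r)) (hv : ∀ i, ‖v i‖ = 1)
    (hangle : ∀ i j, i ≠ j → |(inner ℝ (v i) (v j) : ℝ)| = α)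
    (dbar : ℝ)
    (hd : dbar = (∑ i, (({j | j ≠ i ∧ (inner ℝ (v i) (v j) : ℝ) = -α}.ncard : ℝ))) / n) :
    (n : ℝ) ≤ (1 + (2 * α / (1 - α)) ^ 2 * dbar) * (r + 1) := by
  set S := ∑ i, (({j | j ≠ i ∧ (inner ℝ (v i) (v j) : ℝ) = -α}.ncard : ℝ))
  have hrank : ((shiftedGram v α).rank : ℝ) ≤ r + 1 := by
    exact_mod_cast (rank_shiftedGram_le v α).trans_eq (by simp)
  have htrace_ineq := (isHermitian_shiftedGram v α).trace_sq_le_rank_mul_trace_mul_self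
  rw [trace_shiftedGram hv, trace_shiftedGram_mul_self hv hangle, Fintype.card_fin] at htrace_ineq
  replace htrace_ineq : ((n : ℝ) * (1 - α)) ^ 2 ≤ (r + 1) * (n * (1 - α) ^ 2 + 4 * α ^ 2 * S) :=
    htrace_ineq.trans (mul_le_mul_of_nonneg_right hrank (by positivity))
  rcases (Nat.cast_nonneg (α := ℝ) n).eq_or_lt with hn | hn
  · rw [hd, ← hn, div_zero]; positivity
  have h1α : 0 < 1 - α := by linarith
  rw [hd, ← sub_nonneg]
  have hgap : (1 + (2 * α / (1 - α)) ^ 2 * (S / n)) * (r + 1) - n =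
      ((r + 1) * (n * (1 - α) ^ 2 + 4 * α ^ 2 * S) - (n * (1 - α)) ^ 2) / (n * (1 - α) ^ 2) := by
    field_simp; ring
  rw [hgap]
  exact div_nonneg (sub_nonneg.mpr htrace_ineq) (by positivity)

/-- Rank bound for spherical `{α, −α}`-codes: `n ≤ (1 + (2α/(1−α))²·d̄)(r+1)` where `d̄` is
the average degree of the graph with edges between pairs of vectors with inner product `−α`. -/
theorem stmt12 (r n : ℕ) (α : ℝ) (hα0 : 0 < α) (hα1 : α < 1)
    (v : Fin n → EuclideanSpace ℝ (Fin r)) (hv : ∀ i, ‖v i‖ = 1)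
    (hangle : ∀ i j, i ≠ j → |(inner ℝ (v i) (v j) : ℝ)| = α)
    (dbar : ℝ)
    (hd : dbar = (∑ i, (({j | j ≠ i ∧ (inner ℝ (v i) (v j) : ℝ) = -α}.ncard : ℝ))) / n) :
    (n : ℝ) ≤ (1 + (2 * α / (1 - α)) ^ 2 * dbar) * (r + 1) :=
  stmt12_general r n α hα1 v hv hangle dbar hd
end

section
/- Let 0 < α < 1 and let C be a spherical {α, −α}-code of size n in R^r with associated graph G (edges between pairs with inner product −α, adjacency matrix A). Then for every nonzero x ∈ R^n orthogonal to the all-ones vector 1, x^T A x / x^T x ≤ (1/α − 1)/2. Moreover, if n ≥ r + 2 then this maximum Rayleigh quotient over vectors orthogonal to 1 equals exactly (1/α − 1)/2. -/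
open Matrix

/-!
With `J` the all-ones matrix, the Gram matrix of the code is `α J - 2α A + (1 - α) I`. For
`x ⟂ 1` the `J` term vanishes, so `(1 - α) xᵀx - 2α xᵀAx = ‖∑ xᵢ vᵢ‖² ≥ 0`, which is the bound.
When `n ≥ r + 2` the `n` vectors `(vᵢ, 1) ∈ ℝʳ × ℝ` are linearly dependent; a dependency `x`
is orthogonal to `1` and has `∑ xᵢ vᵢ = 0`, so it attains the bound.
-/

section

variable {K M ι : Type*} [Field K] [AddCommGroup M] [Module K M] [FiniteDimensional K M]
  [Fintype ι]

theorem exists_ne_zero_sum_smul_eq_zero_and_sum_eq_zero (v : ι → M)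
    (h : Module.finrank K M + 1 < Fintype.card ι) :
    ∃ x : ι → K, x ≠ 0 ∧ ∑ i, x i • v i = 0 ∧ ∑ i, x i = 0 := by
  have hdep : ¬LinearIndependent K fun i => (v i, (1 : K)) := fun hli => by
    have := hli.fintype_card_le_finrank
    rw [Module.finrank_prod, Module.finrank_self] at this
    omega
  obtain ⟨x, hx, i, hi⟩ := Fintype.not_linearIndependent_iff.mp hdep
  refine ⟨x, fun h0 => hi (congrFun h0 i), ?_, ?_⟩
  · simpa [Prod.fst_sum] using congrArg Prod.fst hx
  · simpa [Prod.snd_sum] using congrArg Prod.snd hx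

end

section

variable {E ι : Type*} [NormedAddCommGroup E] [InnerProductSpace ℝ E]

theorem dotProduct_gram_mulVec_self [Fintype ι] (v : ι → E) (x : ι → ℝ) :
    x ⬝ᵥ gram ℝ v *ᵥ x = ‖∑ i, x i • v i‖ ^ 2 := by
  rw [← real_inner_self_eq_norm_sq, ← star_dotProduct_gram_mulVec, star_trivial]

variable [DecidableEq ι] {v : ι → E} {α : ℝ} {A : Matrix ι ι ℝ}

theorem gram_eq_of_equiangular (hv : ∀ i, ‖v i‖ = 1)
    (hangle : ∀ i j, i ≠ j → |(inner ℝ (v i) (v j) : ℝ)| = α)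
    (hA : ∀ i j, A i j = if i ≠ j ∧ (inner ℝ (v i) (v j) : ℝ) = -α then 1 else 0) :
    gram ℝ v = α • of (fun _ _ => 1) - (2 * α) • A + (1 - α) • 1 := by
  ext i j
  simp only [gram_apply, Matrix.add_apply, Matrix.sub_apply, Matrix.smul_apply, of_apply,
    one_apply, hA, smul_eq_mul]
  obtain rfl | hij := eq_or_ne i j
  · simp [hv]
  by_cases hneg : (inner ℝ (v i) (v j) : ℝ) = -α
  · simp [hij, hneg]
    ring
  · have hpos : (inner ℝ (v i) (v j) : ℝ) = α :=
      ((abs_eq (hangle i j hij ▸ abs_nonneg _)).mp (hangle i j hij)).resolve_right hneg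
    have hα : α ≠ -α := hpos ▸ hneg
    simp [hij, hpos, hα]

variable [Fintype ι]

theorem norm_sum_smul_sq_eq_of_equiangular (hv : ∀ i, ‖v i‖ = 1)
    (hangle : ∀ i j, i ≠ j → |(inner ℝ (v i) (v j) : ℝ)| = α)
    (hA : ∀ i j, A i j = if i ≠ j ∧ (inner ℝ (v i) (v j) : ℝ) = -α then 1 else 0)
    {x : ι → ℝ} (hx : ∑ i, x i = 0) :
    ‖∑ i, x i • v i‖ ^ 2 = (1 - α) * (x ⬝ᵥ x) - 2 * α * (x ⬝ᵥ A *ᵥ x) := by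
  have hJ : of (fun _ _ : ι => (1 : ℝ)) *ᵥ x = 0 := by
    ext i; simp [mulVec, dotProduct, hx]
  rw [← dotProduct_gram_mulVec_self, gram_eq_of_equiangular hv hangle hA]
  simp only [add_mulVec, sub_mulVec, smul_mulVec, hJ, one_mulVec, dotProduct_add, dotProduct_sub,
    dotProduct_smul, smul_zero, dotProduct_zero, smul_eq_mul]
  ring

end

theorem one_div_sub_one_div_two_eq {α : ℝ} (hα : α ≠ 0) :
    (1 / α - 1) / 2 = (1 - α) / (2 * α) := by
  field_simp

theorem stmt13_general (r n : ℕ) (α : ℝ) (hα0 : 0 < α)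
    (v : Fin n → EuclideanSpace ℝ (Fin r)) (hv : ∀ i, ‖v i‖ = 1)
    (hangle : ∀ i j, i ≠ j → |(inner ℝ (v i) (v j) : ℝ)| = α)
    (A : Matrix (Fin n) (Fin n) ℝ)
    (hA : ∀ i j, A i j = if i ≠ j ∧ (inner ℝ (v i) (v j) : ℝ) = -α then 1 else 0) :
    (∀ x : Fin n → ℝ, x ≠ 0 → x ⬝ᵥ (fun _ => (1 : ℝ)) = 0 →
        x ⬝ᵥ A.mulVec x / (x ⬝ᵥ x) ≤ (1 / α - 1) / 2) ∧
    (r + 2 ≤ n → ∃ x : Fin n → ℝ, x ≠ 0 ∧ x ⬝ᵥ (fun _ => (1 : ℝ)) = 0 ∧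
        x ⬝ᵥ A.mulVec x / (x ⬝ᵥ x) = (1 / α - 1) / 2) := by
  rw [one_div_sub_one_div_two_eq hα0.ne']
  refine ⟨fun x hx hx1 => ?_, fun hn => ?_⟩
  · have hnorm :=
      norm_sum_smul_sq_eq_of_equiangular hv hangle hA ((dotProduct_one x).symm.trans hx1)
    have hxx : 0 < x ⬝ᵥ x := by simpa using dotProduct_star_self_pos_iff.mpr hx
    rw [div_le_div_iff₀ hxx (by positivity)]
    linarith [sq_nonneg ‖∑ i, x i • v i‖]
  · obtain ⟨x, hx, hsmul, hsum⟩ := exists_ne_zero_sum_smul_eq_zero_and_sum_eq_zero (K := ℝ) v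
      (by rw [finrank_euclideanSpace_fin, Fintype.card_fin]; omega)
    have hnorm := norm_sum_smul_sq_eq_of_equiangular hv hangle hA hsum
    rw [hsmul, norm_zero] at hnorm
    have hxx : 0 < x ⬝ᵥ x := by simpa using dotProduct_star_self_pos_iff.mpr hx
    refine ⟨x, hx, (dotProduct_one x).trans hsum, ?_⟩
    rw [div_eq_div_iff hxx.ne' (by positivity)]
    linarith

/-- For the graph associated to a spherical `{α, −α}`-code (adjacency matrix `A`), every
nonzero `x ⟂ 1` has Rayleigh quotient at most `(1/α − 1)/2`; moreover if `n ≥ r + 2` this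
bound is attained, so the maximum Rayleigh quotient equals `(1/α − 1)/2`. -/
theorem stmt13 (r n : ℕ) (α : ℝ) (hα0 : 0 < α) (hα1 : α < 1)
    (v : Fin n → EuclideanSpace ℝ (Fin r)) (hv : ∀ i, ‖v i‖ = 1)
    (hangle : ∀ i j, i ≠ j → |(inner ℝ (v i) (v j) : ℝ)| = α)
    (A : Matrix (Fin n) (Fin n) ℝ)
    (hA : ∀ i j, A i j = if i ≠ j ∧ (inner ℝ (v i) (v j) : ℝ) = -α then 1 else 0) :
    (∀ x : Fin n → ℝ, x ≠ 0 → x ⬝ᵥ (fun _ => (1 : ℝ)) = 0 →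
        x ⬝ᵥ A.mulVec x / (x ⬝ᵥ x) ≤ (1 / α - 1) / 2) ∧
    (r + 2 ≤ n → ∃ x : Fin n → ℝ, x ≠ 0 ∧ x ⬝ᵥ (fun _ => (1 : ℝ)) = 0 ∧
        x ⬝ᵥ A.mulVec x / (x ⬝ᵥ x) = (1 / α - 1) / 2) :=
  stmt13_general r n α hα0 v hv hangle A hA
end

section
/- Let G be a graph on n vertices with maximum degree Δ ≥ 1. For all integers t with 1 ≤ t ≤ Δ, μ(G) ≥ √t − 2Δ(t+1)/n, where μ(G) = max{x^T A x / x^T x : x ≠ 0, x ⟂ 1}. -/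
/-!
Let `v` be a vertex of maximum degree and `T` a set of `t` of its neighbours. The Perron vector
`y` of the star on `{v} ∪ T` (weight `√t` at `v`, `1` on `T`) has Rayleigh quotient at least `√t`.
Subtracting its mean gives a vector orthogonal to `1`; since `A1` has entries at most `Δ` and, by
Cauchy–Schwarz, `(∑ y)² ≤ (t + 1) ‖y‖²`, this costs at most `2Δ(t + 1)/n` in the quotient.
This argument needs the bound to be nonnegative. Otherwise `e_v - e_w` already works: its quotient
is `0` if `w ≁ v`, and `-1` if `v` is adjacent to everything, in which case `Δ = n - 1` forces
the bound below `-1`.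
-/

open Matrix Finset SimpleGraph

section Rayleigh

variable {ι : Type*} [Fintype ι]

lemma dotProduct_self_pos {x : ι → ℝ} (hx : x ≠ 0) : 0 < x ⬝ᵥ x :=
  (Fintype.sum_nonneg fun i => mul_self_nonneg (x i)).lt_of_ne'
    (dotProduct_self_eq_zero.not.mpr hx)

lemma dotProduct_mulVec_self_le (A : Matrix ι ι ℝ) (x : ι → ℝ) :
    x ⬝ᵥ A *ᵥ x ≤ (∑ i, ∑ j, |A i j|) * (x ⬝ᵥ x) := by
  have hsq : ∀ k, x k * x k ≤ x ⬝ᵥ x := fun k =>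
    single_le_sum (f := fun i => x i * x i) (fun i _ => mul_self_nonneg (x i)) (mem_univ k)
  have hprod : ∀ i j, |x i * x j| ≤ x ⬝ᵥ x := fun i j =>
    abs_le.mpr ⟨by nlinarith [sq_nonneg (x i + x j), hsq i, hsq j],
      by nlinarith [sq_nonneg (x i - x j), hsq i, hsq j]⟩
  calc x ⬝ᵥ A *ᵥ x = ∑ i, ∑ j, A i j * (x i * x j) := by
        simp only [dotProduct, mulVec, mul_sum]
        exact sum_congr rfl fun i _ => sum_congr rfl fun j _ => by ring
    _ ≤ ∑ i, ∑ j, |A i j| * (x ⬝ᵥ x) := by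
        refine sum_le_sum fun i _ => sum_le_sum fun j _ => ?_
        calc A i j * (x i * x j) ≤ |A i j * (x i * x j)| := le_abs_self _
          _ = |A i j| * |x i * x j| := abs_mul _ _
          _ ≤ |A i j| * (x ⬝ᵥ x) := by gcongr; exact hprod i j
    _ = (∑ i, ∑ j, |A i j|) * (x ⬝ᵥ x) := by simp only [sum_mul]

lemma bddAbove_rayleigh (A : Matrix ι ι ℝ) (P : (ι → ℝ) → Prop) :
    BddAbove (Set.range fun x : {x : ι → ℝ // x ≠ 0 ∧ P x} =>
      (x.1 ⬝ᵥ A *ᵥ x.1) / (x.1 ⬝ᵥ x.1)) := by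
  refine ⟨∑ i, ∑ j, |A i j|, ?_⟩
  rintro _ ⟨⟨x, hx, -⟩, rfl⟩
  exact (div_le_iff₀ (dotProduct_self_pos hx)).mpr (dotProduct_mulVec_self_le A x)

lemma le_iSup_rayleigh (A : Matrix ι ι ℝ) {P : (ι → ℝ) → Prop} {c : ℝ} {x : ι → ℝ}
    (hx : x ≠ 0) (hP : P x) (hc : c * (x ⬝ᵥ x) ≤ x ⬝ᵥ A *ᵥ x) :
    c ≤ ⨆ x : {x : ι → ℝ // x ≠ 0 ∧ P x}, (x.1 ⬝ᵥ A *ᵥ x.1) / (x.1 ⬝ᵥ x.1) :=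
  ((le_div_iff₀ (dotProduct_self_pos hx)).mpr hc).trans
    (le_ciSup (bddAbove_rayleigh A P) ⟨x, hx, hP⟩)

end Rayleigh

section Centering

variable {ι : Type*} [Fintype ι]

lemma smul_sub_smul_one_dotProduct_one (a b : ℝ) (y : ι → ℝ) :
    (a • y - b • 1) ⬝ᵥ 1 = a * ∑ i, y i - b * Fintype.card ι := by
  simp only [sub_dotProduct, smul_dotProduct, smul_eq_mul, one_dotProduct_one]
  rw [dotProduct_one]

lemma smul_sub_smul_one_dotProduct_self (a b : ℝ) (y : ι → ℝ) :
    (a • y - b • 1) ⬝ᵥ (a • y - b • 1) =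
      a ^ 2 * (y ⬝ᵥ y) - 2 * a * b * ∑ i, y i + b ^ 2 * Fintype.card ι := by
  simp only [dotProduct_sub, sub_dotProduct, dotProduct_smul, smul_dotProduct, smul_eq_mul,
    one_dotProduct_one]
  rw [dotProduct_one, one_dotProduct]
  ring

lemma smul_sub_smul_one_dotProduct_mulVec {A : Matrix ι ι ℝ} (hA : A.IsSymm) (a b : ℝ)
    (y : ι → ℝ) :
    (a • y - b • 1) ⬝ᵥ A *ᵥ (a • y - b • 1) =
      a ^ 2 * (y ⬝ᵥ A *ᵥ y) - 2 * a * b * (y ⬝ᵥ A *ᵥ 1) + b ^ 2 * (1 ⬝ᵥ A *ᵥ 1) := by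
  have hsymm : 1 ⬝ᵥ A *ᵥ y = y ⬝ᵥ A *ᵥ 1 := by
    rw [dotProduct_mulVec, ← mulVec_transpose, hA.eq, dotProduct_comm]
  simp only [mulVec_sub, mulVec_smul, dotProduct_sub, sub_dotProduct, dotProduct_smul,
    smul_dotProduct, smul_eq_mul, hsymm]
  ring

lemma sq_sum_le_card_mul_dotProduct_self {y : ι → ℝ} {S : Finset ι}
    (hyS : ∀ i ∉ S, y i = 0) : (∑ i, y i) ^ 2 ≤ #S * (y ⬝ᵥ y) := by
  have hsum : ∑ i, y i = ∑ i ∈ S, y i :=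
    (sum_subset (subset_univ S) fun i _ hi => hyS i hi).symm
  have hsq : y ⬝ᵥ y = ∑ i ∈ S, y i ^ 2 := by
    rw [dotProduct, ← sum_subset (subset_univ S) fun i _ hi => by simp [hyS i hi]]
    simp only [sq]
  rw [hsum, hsq]
  exact sq_sum_le_card_mul_sum_sq

end Centering

section Graph

variable {V : Type*} [Fintype V] (G : SimpleGraph V) [DecidableRel G.Adj]

lemma neg_adjMatrix_le_iSup_rayleigh_orth_ones [DecidableEq V] {a b : V} (hab : a ≠ b) :
    -G.adjMatrix ℝ a b ≤ ⨆ x : {x : V → ℝ // x ≠ 0 ∧ x ⬝ᵥ (fun _ => (1 : ℝ)) = 0},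
      (x.1 ⬝ᵥ (G.adjMatrix ℝ).mulVec x.1) / (x.1 ⬝ᵥ x.1) := by
  set x : V → ℝ := Pi.single a 1 - Pi.single b 1
  have hx : x ≠ 0 := fun h => by simpa [x, hab] using congrFun h a
  refine le_iSup_rayleigh _ (x := x) hx ?_ ?_
  · simp [x, sub_dotProduct]
  · have hxx : x ⬝ᵥ x = 2 := by
      simp [x, dotProduct_sub, hab, hab.symm]; norm_num
    have hxAx : x ⬝ᵥ G.adjMatrix ℝ *ᵥ x = -2 * G.adjMatrix ℝ a b := by
      simp [x, mulVec_sub, dotProduct_sub, sub_dotProduct, G.adj_comm b a]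
      split_ifs <;> norm_num
    rw [hxx, hxAx]
    linarith

lemma adjMatrix_mulVec_one_apply {α : Type*} [NonAssocSemiring α] (i : V) :
    (G.adjMatrix α *ᵥ 1) i = G.degree i := by
  simp

lemma dotProduct_adjMatrix_mulVec_one_le {y : V → ℝ} (hy : 0 ≤ y) :
    y ⬝ᵥ G.adjMatrix ℝ *ᵥ 1 ≤ G.maxDegree * ∑ i, y i := by
  simp only [dotProduct, mul_sum, adjMatrix_mulVec_one_apply, mul_comm (y _)]
  exact sum_le_sum fun i _ =>
    mul_le_mul_of_nonneg_right (by exact_mod_cast G.degree_le_maxDegree i) (hy i)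

lemma one_dotProduct_adjMatrix_mulVec_one_nonneg : 0 ≤ 1 ⬝ᵥ G.adjMatrix ℝ *ᵥ 1 :=
  dotProduct_nonneg_of_nonneg zero_le_one fun i => by
    simp only [Pi.zero_apply, adjMatrix_mulVec_one_apply]; positivity

theorem le_iSup_rayleigh_orth_ones_of_support_subset {y : V → ℝ} {S : Finset V} {l : ℝ}
    (hy : 0 ≤ y) (hy0 : y ≠ 0) (hyS : ∀ i ∉ S, y i = 0) (hS : #S < Fintype.card V)
    (hl : l * (y ⬝ᵥ y) ≤ y ⬝ᵥ G.adjMatrix ℝ *ᵥ y)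
    (hc : 0 ≤ l - 2 * G.maxDegree * #S / Fintype.card V) :
    l - 2 * G.maxDegree * #S / Fintype.card V ≤
      ⨆ x : {x : V → ℝ // x ≠ 0 ∧ x ⬝ᵥ (fun _ => (1 : ℝ)) = 0},
        (x.1 ⬝ᵥ (G.adjMatrix ℝ).mulVec x.1) / (x.1 ⬝ᵥ x.1) := by
  set n : ℝ := (Fintype.card V : ℝ)
  set c := l - 2 * G.maxDegree * #S / n
  set σ := ∑ i, y i
  set ρ := y ⬝ᵥ y
  have hSn : (#S : ℝ) < n := Nat.cast_lt.mpr hS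
  have hn : 0 < n := (Nat.cast_nonneg _).trans_lt hSn
  have hρ : 0 < ρ := dotProduct_self_pos hy0
  have hσ : 0 ≤ σ := Fintype.sum_nonneg hy
  have hCS : σ ^ 2 ≤ #S * ρ := sq_sum_le_card_mul_dotProduct_self hyS
  -- `y` minus its mean, scaled by `n` to avoid division.
  set x : V → ℝ := n • y - σ • 1
  have hx1 : x ⬝ᵥ 1 = 0 := by
    rw [smul_sub_smul_one_dotProduct_one]; ring
  have hxx : x ⬝ᵥ x = n * (n * ρ - σ ^ 2) := by
    rw [smul_sub_smul_one_dotProduct_self]; ring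
  have hxx_pos : 0 < x ⬝ᵥ x := by
    rw [hxx]
    exact mul_pos hn (by nlinarith [mul_lt_mul_of_pos_right hSn hρ])
  have hxAx : n * (n * (y ⬝ᵥ G.adjMatrix ℝ *ᵥ y) - 2 * G.maxDegree * σ ^ 2) ≤
      x ⬝ᵥ G.adjMatrix ℝ *ᵥ x := by
    rw [smul_sub_smul_one_dotProduct_mulVec (isSymm_adjMatrix (α := ℝ) G)]
    nlinarith [mul_le_mul_of_nonneg_left (dotProduct_adjMatrix_mulVec_one_le G hy)
        (by positivity : 0 ≤ 2 * n * σ),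
      mul_nonneg (sq_nonneg σ) (one_dotProduct_adjMatrix_mulVec_one_nonneg G)]
  refine le_iSup_rayleigh _ (x := x) (fun h => by simp [h] at hxx_pos) hx1 ?_
  have hΔ : (0 : ℝ) ≤ G.maxDegree := Nat.cast_nonneg _
  calc c * (x ⬝ᵥ x) ≤ c * (n ^ 2 * ρ) := by
        rw [hxx]
        exact mul_le_mul_of_nonneg_left (by nlinarith [sq_nonneg σ]) hc
    _ = n * (n * (l * ρ) - 2 * G.maxDegree * (#S * ρ)) := by
        simp only [c]; field_simp
    _ ≤ n * (n * (y ⬝ᵥ G.adjMatrix ℝ *ᵥ y) - 2 * G.maxDegree * σ ^ 2) := by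
        gcongr
    _ ≤ x ⬝ᵥ G.adjMatrix ℝ *ᵥ x := hxAx

end Graph

section Star

variable {V : Type*} [DecidableEq V]

def starVector (v : V) (T : Finset V) (a : ℝ) : V → ℝ :=
  fun i => if i = v then a else if i ∈ T then 1 else 0

variable {v : V} {T : Finset V} {a : ℝ}

lemma starVector_nonneg (ha : 0 ≤ a) : 0 ≤ starVector v T a := fun i => by
  unfold starVector; split_ifs <;> simp [ha]

lemma starVector_apply_of_notMem {i : V} (hi : i ∉ insert v T) : starVector v T a i = 0 := by
  rw [mem_insert, not_or] at hi
  simp [starVector, hi.1, hi.2]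

lemma starVector_apply_of_mem {u : V} (hvT : v ∉ T) (hu : u ∈ T) : starVector v T a u = 1 := by
  simp [starVector, ne_of_mem_of_not_mem hu hvT, hu]

lemma starVector_dotProduct_self [Fintype V] (hvT : v ∉ T) :
    starVector v T a ⬝ᵥ starVector v T a = a ^ 2 + #T := by
  rw [dotProduct, ← sum_subset (subset_univ (insert v T)) fun i _ hi => by
    simp [starVector_apply_of_notMem hi], sum_insert hvT,
    sum_congr rfl fun u hu => by rw [starVector_apply_of_mem hvT hu, one_mul]]
  simp [starVector, sq]

lemma le_starVector_dotProduct_adjMatrix_mulVec [Fintype V] (G : SimpleGraph V)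
    [DecidableRel G.Adj] (ha : 0 ≤ a) (hT : T ⊆ G.neighborFinset v) :
    2 * a * #T ≤ starVector v T a ⬝ᵥ G.adjMatrix ℝ *ᵥ starVector v T a := by
  set y := starVector v T a
  set z := G.adjMatrix ℝ *ᵥ y
  have hvT : v ∉ T := fun h => G.notMem_neighborFinset_self v (hT h)
  have hy := starVector_nonneg (v := v) (T := T) ha
  have hyT : ∀ u ∈ T, y u = 1 := fun u hu => starVector_apply_of_mem hvT hu
  have hyv : y v = a := by simp [y, starVector]
  have hz : 0 ≤ z := fun i => by
    simp only [z, adjMatrix_mulVec_apply]; exact sum_nonneg fun j _ => hy j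
  have hcentre : (#T : ℝ) ≤ z v := by
    calc (#T : ℝ) = ∑ u ∈ T, y u := by simp [sum_congr rfl hyT]
      _ ≤ z v := by
        simp only [z, adjMatrix_mulVec_apply]
        exact sum_le_sum_of_subset_of_nonneg hT fun j _ _ => hy j
  have hleaf : ∀ u ∈ T, a ≤ z u := fun u hu => by
    rw [← hyv]
    simp only [z, adjMatrix_mulVec_apply]
    exact single_le_sum (fun j _ => hy j) ((mem_neighborFinset ..).mpr
      ((mem_neighborFinset ..).mp (hT hu)).symm)
  calc 2 * a * #T = a * #T + ∑ _u ∈ T, a := by rw [sum_const, nsmul_eq_mul]; ring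
    _ ≤ y v * z v + ∑ u ∈ T, y u * z u := by
        rw [hyv]
        gcongr with u hu
        rw [hyT u hu, one_mul]; exact hleaf u hu
    _ = ∑ i ∈ insert v T, y i * z i := by rw [sum_insert hvT]
    _ ≤ y ⬝ᵥ z := sum_le_sum_of_subset_of_nonneg (subset_univ _) fun i _ _ =>
        mul_nonneg (hy i) (hz i)

theorem sqrt_card_sub_le_iSup_rayleigh_orth_ones [Fintype V] (G : SimpleGraph V)
    [DecidableRel G.Adj] (hT : T ⊆ G.neighborFinset v) (hT0 : T.Nonempty)
    (hc : 0 ≤ Real.sqrt #T - 2 * G.maxDegree * (#T + 1) / Fintype.card V) :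
    Real.sqrt #T - 2 * G.maxDegree * (#T + 1) / Fintype.card V ≤
      ⨆ x : {x : V → ℝ // x ≠ 0 ∧ x ⬝ᵥ (fun _ => (1 : ℝ)) = 0},
        (x.1 ⬝ᵥ (G.adjMatrix ℝ).mulVec x.1) / (x.1 ⬝ᵥ x.1) := by
  have hvT : v ∉ T := fun h => G.notMem_neighborFinset_self v (hT h)
  have ht : (1 : ℝ) ≤ #T := by exact_mod_cast hT0.card_pos
  have hs : 0 < Real.sqrt #T := Real.sqrt_pos.mpr (by linarith)
  have hs2 : Real.sqrt #T ^ 2 = #T := Real.sq_sqrt (Nat.cast_nonneg _)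
  have hsT : Real.sqrt #T ≤ #T := Real.sqrt_le_self_iff.mpr (Or.inr ht)
  have hTΔ : (#T : ℝ) ≤ G.maxDegree := by
    have := (card_le_card hT).trans ((G.card_neighborFinset_eq_degree v).trans_le
      (G.degree_le_maxDegree v))
    exact_mod_cast this
  have hn : (0 : ℝ) < Fintype.card V := by exact_mod_cast Fintype.card_pos_iff.mpr ⟨v⟩
  have hcard : #(insert v T) < Fintype.card V := by
    have : 2 * G.maxDegree * (#T + 1) ≤ Real.sqrt #T * Fintype.card V := by
      rw [sub_nonneg, div_le_iff₀ hn] at hc; exact hc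
    have : (#T : ℝ) + 1 < Fintype.card V := by nlinarith
    rw [card_insert_of_notMem hvT]; exact_mod_cast this
  have key := le_iSup_rayleigh_orth_ones_of_support_subset G (starVector_nonneg hs.le)
    (fun h => by simpa [starVector, hs.ne'] using congrFun h v)
    (fun i hi => starVector_apply_of_notMem hi) hcard
    (l := Real.sqrt #T) (by
      rw [starVector_dotProduct_self hvT, hs2]
      linarith [le_starVector_dotProduct_adjMatrix_mulVec G hs.le hT])
  rw [card_insert_of_notMem hvT, Nat.cast_add_one] at key
  exact key hc

end Star

lemma sqrt_sub_div_le_neg_one {t n Δ : ℝ} (ht : 1 ≤ t) (hn : 0 < n) (hnΔ : n ≤ 2 * Δ) :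
    Real.sqrt t - 2 * Δ * (t + 1) / n ≤ -1 := by
  have hsqrt : Real.sqrt t ≤ t := Real.sqrt_le_self_iff.mpr (Or.inr ht)
  have : t + 1 ≤ 2 * Δ * (t + 1) / n := by
    rw [le_div_iff₀ hn]; nlinarith
  linarith

theorem stmt16_general (n t : ℕ) (G : SimpleGraph (Fin n)) [DecidableRel G.Adj]
    (ht : 1 ≤ t) (htΔ : t ≤ G.maxDegree) :
    (⨆ x : {x : Fin n → ℝ // x ≠ 0 ∧ x ⬝ᵥ (fun _ => (1 : ℝ)) = 0},
        (x.1 ⬝ᵥ (G.adjMatrix ℝ).mulVec x.1) / (x.1 ⬝ᵥ x.1))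
      ≥ Real.sqrt t - 2 * (G.maxDegree : ℝ) * (t + 1) / n := by
  have : Nonempty (Fin n) := by
    by_contra h
    have := not_nonempty_iff.mp h
    rw [G.maxDegree_of_subsingleton] at htΔ
    omega
  obtain ⟨v, hv⟩ := G.exists_maximal_degree_vertex
  obtain ⟨T, hTv, rfl⟩ : ∃ T ⊆ G.neighborFinset v, #T = t :=
    exists_subset_card_eq (by rwa [card_neighborFinset_eq_degree, ← hv])
  have hT0 : T.Nonempty := card_pos.mp ht
  have hcard := Fintype.card_fin n
  rcases le_or_gt 0 (Real.sqrt #T - 2 * (G.maxDegree : ℝ) * (#T + 1) / n) with hc | hc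
  · have := sqrt_card_sub_le_iSup_rayleigh_orth_ones G hTv hT0 (by rwa [hcard])
    rwa [hcard] at this
  by_cases huniv : G.IsUniversal v
  · obtain ⟨u, hu⟩ := hT0
    have hvu : G.Adj v u := (mem_neighborFinset ..).mp (hTv hu)
    have hΔ : G.maxDegree = n - 1 := by rw [hv, (G.degree_eq_card_sub_one v).mpr huniv, hcard]
    have hn : (2 : ℝ) ≤ n := by exact_mod_cast (by omega : 2 ≤ n)
    calc _ ≤ -1 := sqrt_sub_div_le_neg_one (by exact_mod_cast ht) (by positivity) (by
          rw [hΔ, Nat.cast_sub (by omega)]; push_cast; linarith)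
      _ = -G.adjMatrix ℝ v u := by simp [hvu]
      _ ≤ _ := neg_adjMatrix_le_iSup_rayleigh_orth_ones G hvu.ne
  · obtain ⟨w, hvw, hnadj⟩ : ∃ w, v ≠ w ∧ ¬ G.Adj v w := by simpa [IsUniversal] using huniv
    calc _ ≤ (0 : ℝ) := hc.le
      _ = -G.adjMatrix ℝ v w := by simp [hnadj]
      _ ≤ _ := neg_adjMatrix_le_iSup_rayleigh_orth_ones G hvw

/-- For a graph `G` on `n` vertices with maximum degree `Δ ≥ 1` and any `1 ≤ t ≤ Δ`,
`μ(G) ≥ √t − 2Δ(t+1)/n`, where `μ(G)` is the maximum Rayleigh quotient of the adjacency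
matrix over nonzero vectors orthogonal to the all-ones vector. -/
theorem stmt16 (n t : ℕ) (G : SimpleGraph (Fin n)) [DecidableRel G.Adj]
    (hΔ : 1 ≤ G.maxDegree) (ht : 1 ≤ t) (htΔ : t ≤ G.maxDegree) :
    (⨆ x : {x : Fin n → ℝ // x ≠ 0 ∧ x ⬝ᵥ (fun _ => (1 : ℝ)) = 0},
        (x.1 ⬝ᵥ (G.adjMatrix ℝ).mulVec x.1) / (x.1 ⬝ᵥ x.1))
      ≥ Real.sqrt t - 2 * (G.maxDegree : ℝ) * (t + 1) / n :=
  stmt16_general n t G ht htΔ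
end

section
/- Let G be a k-regular graph on n vertices with adjacency matrix A having second largest eigenvalue λ_2 and smallest eigenvalue λ_n. If the spectral gap satisfies k − λ_2 < n/2, then −λ_n ≤ λ_2(λ_2 + 1)/(1 − 2(k−λ_2)/n) − λ_2. -/
/-!
Write `s = λ₂`. If `s < k`, every eigenvector other than the top one is orthogonal to `𝟙`, so
`N = n (s I - A) + (k - s) J` is positive semidefinite: it kills `𝟙` and is `n (s I - A) ⪰ 0`
on `𝟙ᗮ`. By the Schur product theorem so is `N ⊙ N = (k - s)² J + n s (2 (k - s) + n s) I +
n (n - 2 (k - s)) A`, and evaluating its quadratic form at a unit eigenvector `w ⊥ 𝟙` of `λₙ`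
gives `(n - 2 (k - s)) (-λₙ) ≤ s (2 (k - s) + n s)`, which is the claim after dividing by
`n - 2 (k - s) > 0`. If `s = k`, the claim reduces to `-λₙ ≤ k ≤ k²` (Gershgorin).
-/

open Matrix Finset

namespace Matrix.IsHermitian

variable {ι : Type*} [Fintype ι] {A : Matrix ι ι ℝ}

lemma dotProduct_mulVec_comm (hA : A.IsHermitian) (x y : ι → ℝ) :
    x ⬝ᵥ (A *ᵥ y) = y ⬝ᵥ (A *ᵥ x) := by
  rw [dotProduct_mulVec, ← mulVec_transpose, (isHermitian_iff_isSymm.mp hA).eq, dotProduct_comm]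

variable [DecidableEq ι] (hA : A.IsHermitian)

lemma eigenvectorBasis_dotProduct_mulVec (j : ι) (y : ι → ℝ) :
    ⇑(hA.eigenvectorBasis j) ⬝ᵥ (A *ᵥ y) =
      hA.eigenvalues j * (⇑(hA.eigenvectorBasis j) ⬝ᵥ y) := by
  rw [hA.dotProduct_mulVec_comm, mulVec_eigenvectorBasis, dotProduct_smul, smul_eq_mul,
    dotProduct_comm]

lemma dotProduct_eq_sum_eigenvectorBasis (x y : ι → ℝ) :
    x ⬝ᵥ y = ∑ j, (⇑(hA.eigenvectorBasis j) ⬝ᵥ x) * (⇑(hA.eigenvectorBasis j) ⬝ᵥ y) := by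
  have h := hA.eigenvectorBasis.sum_inner_mul_inner (WithLp.toLp 2 x) (WithLp.toLp 2 y)
  simp only [EuclideanSpace.inner_eq_star_dotProduct, star_trivial] at h
  rw [dotProduct_comm x, ← h]
  exact sum_congr rfl fun j _ => by rw [dotProduct_comm y]

lemma dotProduct_mulVec_eq_sum_eigenvalues (x y : ι → ℝ) :
    x ⬝ᵥ (A *ᵥ y) = ∑ j, hA.eigenvalues j *
      ((⇑(hA.eigenvectorBasis j) ⬝ᵥ x) * (⇑(hA.eigenvectorBasis j) ⬝ᵥ y)) := by
  simp only [hA.dotProduct_eq_sum_eigenvectorBasis x, eigenvectorBasis_dotProduct_mulVec]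
  exact sum_congr rfl fun j _ => by ring

lemma eigenvectorBasis_dotProduct_eq_zero {v : ι → ℝ} {c : ℝ} (hv : A *ᵥ v = c • v) {j : ι}
    (hj : hA.eigenvalues j ≠ c) : ⇑(hA.eigenvectorBasis j) ⬝ᵥ v = 0 := by
  have h := hA.eigenvectorBasis_dotProduct_mulVec j v
  rw [hv, dotProduct_smul, smul_eq_mul] at h
  exact (mul_eq_zero.mp (by linear_combination h : (c - hA.eigenvalues j) * _ = 0)).resolve_left
    (sub_ne_zero.mpr hj.symm)

lemma dotProduct_mulVec_le_of_eigenvalues_le {s : ℝ} {j₀ : ι}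
    (hs : ∀ j ≠ j₀, hA.eigenvalues j ≤ s) {y : ι → ℝ}
    (hy : ⇑(hA.eigenvectorBasis j₀) ⬝ᵥ y = 0) : y ⬝ᵥ (A *ᵥ y) ≤ s * (y ⬝ᵥ y) := by
  rw [hA.dotProduct_mulVec_eq_sum_eigenvalues, hA.dotProduct_eq_sum_eigenvectorBasis y y,
    mul_sum]
  refine sum_le_sum fun j _ => ?_
  rcases eq_or_ne j j₀ with rfl | hj
  · simp [hy]
  · exact mul_le_mul_of_nonneg_right (hs j hj) (mul_self_nonneg _)

lemma eigenvectorBasis_dotProduct_eq_zero_of_dotProduct_eq_zero {v : ι → ℝ} {c : ℝ}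
    (hv : A *ᵥ v = c • v) (hv₀ : v ≠ 0) {j₀ : ι} (hc : ∀ j ≠ j₀, hA.eigenvalues j ≠ c)
    {y : ι → ℝ} (hy : y ⬝ᵥ v = 0) : ⇑(hA.eigenvectorBasis j₀) ⬝ᵥ y = 0 := by
  have hsum (x : ι → ℝ) : x ⬝ᵥ v =
      (⇑(hA.eigenvectorBasis j₀) ⬝ᵥ x) * (⇑(hA.eigenvectorBasis j₀) ⬝ᵥ v) := by
    rw [hA.dotProduct_eq_sum_eigenvectorBasis, sum_eq_single j₀ (fun j _ hj => by
      rw [hA.eigenvectorBasis_dotProduct_eq_zero hv (hc j hj), mul_zero]) (by simp)]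
  have hv' : ⇑(hA.eigenvectorBasis j₀) ⬝ᵥ v ≠ 0 := fun h =>
    hv₀ (dotProduct_self_eq_zero.mp (by rw [hsum, h, mul_zero]))
  exact (mul_eq_zero.mp ((hsum y).symm.trans hy)).resolve_right hv'

lemma hasEigenvalue_toLin'_eigenvalues (j : ι) :
    Module.End.HasEigenvalue (toLin' A) (hA.eigenvalues j) :=
  Module.End.hasEigenvalue_of_hasEigenvector <| Module.End.hasEigenvector_iff.mpr
    ⟨by rw [Module.End.mem_eigenspace_iff, toLin'_apply, mulVec_eigenvectorBasis],
      by simpa using hA.eigenvectorBasis.orthonormal.ne_zero j⟩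

end Matrix.IsHermitian

namespace Matrix

variable {ι : Type*} [Fintype ι] [DecidableEq ι]

lemma dotProduct_smul_of_one_add_smul_one_add_smul_mulVec (α β γ : ℝ) (A : Matrix ι ι ℝ)
    (x : ι → ℝ) :
    x ⬝ᵥ ((α • of 1 + β • 1 + γ • A) *ᵥ x) =
      α * (x ⬝ᵥ 1) ^ 2 + β * (x ⬝ᵥ x) + γ * (x ⬝ᵥ (A *ᵥ x)) := by
  have hJ : x ⬝ᵥ (of 1 *ᵥ x) = (x ⬝ᵥ 1) ^ 2 := by simp [mulVec, dotProduct, sq, sum_mul]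
  simp only [add_mulVec, smul_mulVec, one_mulVec, dotProduct_add, dotProduct_smul, hJ,
    smul_eq_mul]

noncomputable def gapMatrix (A : Matrix ι ι ℝ) (k s : ℝ) : Matrix ι ι ℝ :=
  (k - s) • of 1 + (Fintype.card ι * s : ℝ) • 1 + (-Fintype.card ι : ℝ) • A

lemma posSemidef_gapMatrix [Nonempty ι] {A : Matrix ι ι ℝ} (hA : A.IsHermitian) {k s : ℝ}
    (hk : A *ᵥ 1 = k • 1) (hs : ∀ y, y ⬝ᵥ 1 = 0 → y ⬝ᵥ (A *ᵥ y) ≤ s * (y ⬝ᵥ y)) :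
    (gapMatrix A k s).PosSemidef := by
  refine .of_dotProduct_mulVec_nonneg ?_ fun x => ?_
  · have hJ : (of 1 : Matrix ι ι ℝ).IsHermitian := by ext; simp
    exact ((hJ.smul (.all _)).add (isHermitian_one.smul (.all _))).add (hA.smul (.all _))
  set n : ℝ := (Fintype.card ι : ℝ)
  set S := x ⬝ᵥ 1
  have h11 : (1 : ι → ℝ) ⬝ᵥ 1 = n := by simp [n]
  have h1Ax : 1 ⬝ᵥ (A *ᵥ x) = k * S := by
    rw [hA.dotProduct_mulVec_comm, hk, dotProduct_smul, smul_eq_mul]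
  -- `n • x - S • 1` is the projection of `n • x` onto `𝟙ᗮ`
  have hy := hs (n • x - S • 1) (by simp [sub_dotProduct, h11, S, mul_comm])
  simp only [mulVec_sub, mulVec_smul, hk, dotProduct_sub, sub_dotProduct, dotProduct_smul,
    smul_dotProduct, smul_eq_mul, h11, h1Ax, dotProduct_comm 1 x] at hy
  rw [star_trivial, gapMatrix, dotProduct_smul_of_one_add_smul_one_add_smul_mulVec]
  exact nonneg_of_mul_nonneg_right (by linear_combination hy) (by positivity : (0 : ℝ) < n)

end Matrix

namespace SimpleGraph

variable {V : Type*} [Fintype V] {G : SimpleGraph V} [DecidableRel G.Adj] {k : ℕ}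

lemma IsRegularOfDegree.adjMatrix_mulVec_one (hreg : G.IsRegularOfDegree k) :
    G.adjMatrix ℝ *ᵥ 1 = (k : ℝ) • 1 := by
  ext v
  simpa using G.adjMatrix_mulVec_const_apply_of_regular (a := (1 : ℝ)) hreg (v := v)

variable [DecidableEq V]

lemma IsRegularOfDegree.abs_le_of_hasEigenvalue (hreg : G.IsRegularOfDegree k) {μ : ℝ}
    (hμ : Module.End.HasEigenvalue (toLin' (G.adjMatrix ℝ)) μ) : |μ| ≤ k := by
  obtain ⟨i, hi⟩ := eigenvalue_mem_ball hμ
  have hrow : ∑ j ∈ univ.erase i, ‖G.adjMatrix ℝ i j‖ = k := by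
    rw [sum_erase _ (by simp), ← hreg i]
    simp [adjMatrix_apply, apply_ite, ← card_neighborFinset_eq_degree, neighborFinset_eq_filter]
  rw [hrow] at hi
  simpa [Real.dist_eq] using hi

lemma hadamard_self_gapMatrix_adjMatrix (k s : ℝ) :
    gapMatrix (G.adjMatrix ℝ) k s ⊙ gapMatrix (G.adjMatrix ℝ) k s =
      (k - s) ^ 2 • of 1 + (Fintype.card V * s * (2 * (k - s) + Fintype.card V * s) : ℝ) • 1 +
        (Fintype.card V * (Fintype.card V - 2 * (k - s)) : ℝ) • G.adjMatrix ℝ := by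
  ext i j
  simp only [gapMatrix, hadamard_apply, Matrix.add_apply, Matrix.smul_apply, of_apply,
    Pi.one_apply, one_apply, adjMatrix_apply, smul_eq_mul]
  split_ifs with hij hadj hadj
  · exact absurd hadj (hij ▸ G.irrefl)
  all_goals ring

lemma IsRegularOfDegree.mul_neg_eigenvalues_le (hreg : G.IsRegularOfDegree k)
    (hA : (G.adjMatrix ℝ).IsHermitian) {s : ℝ} {j₀ : V} (hs : ∀ j ≠ j₀, hA.eigenvalues j ≤ s)
    (hsk : s < k) {l : V} (hl : l ≠ j₀) :
    (Fintype.card V - 2 * (k - s)) * -hA.eigenvalues l ≤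
      s * (2 * (k - s) + Fintype.card V * s) := by
  have : Nonempty V := ⟨j₀⟩
  have hne : ∀ j ≠ j₀, hA.eigenvalues j ≠ k := fun j hj => ((hs j hj).trans_lt hsk).ne
  have h1 := hreg.adjMatrix_mulVec_one
  have hN : (gapMatrix (G.adjMatrix ℝ) k s).PosSemidef :=
    posSemidef_gapMatrix hA h1 fun y hy => hA.dotProduct_mulVec_le_of_eigenvalues_le hs
      (hA.eigenvectorBasis_dotProduct_eq_zero_of_dotProduct_eq_zero h1 one_ne_zero hne hy)
  set w := ⇑(hA.eigenvectorBasis l)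
  have hw1 : w ⬝ᵥ 1 = 0 := hA.eigenvectorBasis_dotProduct_eq_zero h1 (hne l hl)
  have hww : w ⬝ᵥ w = 1 := by
    have h := real_inner_self_eq_norm_sq (hA.eigenvectorBasis l)
    rwa [hA.eigenvectorBasis.orthonormal.1 l, EuclideanSpace.inner_eq_star_dotProduct,
      star_trivial, one_pow] at h
  have hwAw : w ⬝ᵥ (G.adjMatrix ℝ *ᵥ w) = hA.eigenvalues l := by
    rw [hA.mulVec_eigenvectorBasis, dotProduct_smul, hww, smul_eq_mul, mul_one]
  have hschur := (hN.hadamard hN).dotProduct_mulVec_nonneg w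
  rw [star_trivial, hadamard_self_gapMatrix_adjMatrix,
    dotProduct_smul_of_one_add_smul_one_add_smul_mulVec, hw1, hww, hwAw] at hschur
  have hn : (0 : ℝ) < Fintype.card V := by positivity
  exact le_of_mul_le_mul_left (by linear_combination hschur) hn

end SimpleGraph

/-- Alon–Boppana type bound for dense regular graphs: if `G` is `k`-regular on `n ≥ 2`
vertices with adjacency eigenvalues `e 0 ≥ e 1 ≥ ... ≥ e (n-1)` (so `λ₂ = e 1` and
`λₙ = e (n-1)`), and the spectral gap satisfies `k − λ₂ < n/2`, then
`−λₙ ≤ λ₂(λ₂+1)/(1 − 2(k−λ₂)/n) − λ₂`. -/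
theorem stmt17 (n k : ℕ) (hn : 2 ≤ n) (G : SimpleGraph (Fin n)) [DecidableRel G.Adj]
    (hreg : G.IsRegularOfDegree k)
    (hA : (G.adjMatrix ℝ).IsHermitian)
    (e : Fin n → ℝ) (σ : Equiv.Perm (Fin n))
    (he : ∀ i, e i = hA.eigenvalues (σ i)) (hmono : Antitone e)
    (hgap : (k : ℝ) - e ⟨1, by omega⟩ < n / 2) :
    -(e ⟨n - 1, by omega⟩) ≤
      (e ⟨1, by omega⟩) * (e ⟨1, by omega⟩ + 1) / (1 - 2 * ((k : ℝ) - e ⟨1, by omega⟩) / n)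
        - e ⟨1, by omega⟩ := by
  have habs (i : Fin n) : |e i| ≤ k :=
    he i ▸ hreg.abs_le_of_hasEigenvalue (hA.hasEigenvalue_toLin'_eigenvalues _)
  set s := e ⟨1, by omega⟩
  obtain hsk | hks := lt_or_ge s k
  · have hs : ∀ j ≠ σ ⟨0, by omega⟩, hA.eigenvalues j ≤ s := fun j hj => by
      rw [← σ.apply_symm_apply j, ← he]
      exact hmono (Fin.le_def.mpr (Nat.one_le_iff_ne_zero.mpr fun h => hj (by simp [← h])))
    have key := hreg.mul_neg_eigenvalues_le hA hs hsk (l := σ ⟨n - 1, by omega⟩)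
      (σ.injective.ne (by simp [Fin.ext_iff]; omega))
    rw [← he, Fintype.card_fin] at key
    have hn : (0 : ℝ) < n := by positivity
    have hd : 0 < (n : ℝ) - 2 * (k - s) := by linarith
    rw [one_sub_div hn.ne', le_sub_iff_add_le, le_div_iff₀ (div_pos hd hn), mul_div_assoc',
      div_le_iff₀ hn]
    linear_combination key
  · have hsk : s = k := le_antisymm ((le_abs_self s).trans (habs _)) hks
    have hk : (k : ℝ) ≤ k ^ 2 := by exact_mod_cast Nat.le_self_pow two_ne_zero k
    rw [hsk, sub_self, mul_zero, zero_div, sub_zero, div_one]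
    linarith [neg_le_abs (e ⟨n - 1, by omega⟩), habs ⟨n - 1, by omega⟩]
end

section
/- Let 0 < α < 1 and let M be the Gram matrix of a spherical {α, −α}-code of size n in R^r. Suppose the all-ones vector 1 is an eigenvector of M with eigenvalue λ ≠ 0. Then: (a) λ^2 ≥ n(α^2 n + 1 − α^2) − ((1−α^2)/2)·n·(n/λ − 1), and (b) any eigenvalue μ of M corresponding to an eigenvector orthogonal to 1 satisfies μ ≤ (1−α^2)n/(2λ). -/
/-!
Let `u = ∑ vᵢ` and, for `z ⊥ 𝟙`, `w = ∑ zᵢ vᵢ`. Cauchy–Schwarz in `E ⊗ E` between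
`F = ∑ zᵢ vᵢ ⊗ vᵢ` and `G = u ⊗ w + w ⊗ u` reads `(2λ‖w‖²)² ≤ (1 - α²)‖z‖² · 2nλ‖w‖²`, because
`⟪vᵢ, u⟫ = λ` and `⟪u, w⟫ = 0`. Hence `2λ zᵀMz ≤ (1 - α²) n ‖z‖²` on `𝟙^⊥`, which is (b).
For (a), the `i`-th row `z` of the centred Gram matrix `M - (λ/n) J` is `⟪vᵢ - u/n, v_·⟫`, so
`‖z‖² ≤ ‖vᵢ - u/n‖ ‖∑ zⱼ vⱼ‖` and the bound above give `2λ‖z‖² ≤ (1 - α²)(n - λ)`. Summing over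
the rows, the Frobenius norm `n(α²n + 1 - α²) - λ²` of the centred Gram matrix is at most
`n(1 - α²)(n - λ) / 2λ`.
-/

open Matrix
open scoped RealInnerProductSpace TensorProduct

theorem sum_sum_mul_mul_eq_of_offDiag {ι : Type*} [Fintype ι] {t : ι → ι → ℝ} {c : ℝ}
    (hdiag : ∀ i, t i i = 1) (hoff : ∀ i j, i ≠ j → t i j = c) (z : ι → ℝ) :
    ∑ i, ∑ j, z i * z j * t i j = c * (∑ i, z i) ^ 2 + (1 - c) * ∑ i, z i ^ 2 := by
  classical
  have ht : ∀ i j, t i j = c + if i = j then 1 - c else 0 := by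
    intro i j
    by_cases hij : i = j
    · subst hij; simp [hdiag]
    · simp [hij, hoff i j hij]
  simp only [ht, mul_add, Finset.sum_add_distrib, mul_ite, mul_zero, Finset.sum_ite_eq,
    Finset.mem_univ, if_true]
  rw [sq, Finset.sum_mul_sum, Finset.mul_sum, Finset.mul_sum]
  congr 1 <;> refine Finset.sum_congr rfl fun i _ => ?_
  · rw [Finset.mul_sum]; exact Finset.sum_congr rfl fun j _ => by ring
  · ring

structure IsRegularEquiangular {ι E : Type*} [Fintype ι] [NormedAddCommGroup E]
    [InnerProductSpace ℝ E] (v : ι → E) (α lam : ℝ) : Prop where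
  norm_eq_one : ∀ i, ‖v i‖ = 1
  abs_inner_eq : ∀ i j, i ≠ j → |⟪v i, v j⟫| = α
  gram_mulVec_one : gram ℝ v *ᵥ (fun _ => 1) = lam • (fun _ => 1)

namespace IsRegularEquiangular

variable {ι E : Type*} [Fintype ι] [NormedAddCommGroup E] [InnerProductSpace ℝ E]
  {v : ι → E} {α lam : ℝ}

theorem inner_self_eq_one (h : IsRegularEquiangular v α lam) (i : ι) : ⟪v i, v i⟫ = 1 := by
  rw [real_inner_self_eq_norm_sq, h.norm_eq_one, one_pow]

theorem inner_sq_eq (h : IsRegularEquiangular v α lam) {i j : ι} (hij : i ≠ j) :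
    ⟪v i, v j⟫ ^ 2 = α ^ 2 := by
  rw [← sq_abs, h.abs_inner_eq i j hij]

theorem inner_sum_eq (h : IsRegularEquiangular v α lam) (i : ι) : ⟪v i, ∑ j, v j⟫ = lam := by
  simpa [inner_sum, mulVec, dotProduct] using congrFun h.gram_mulVec_one i

theorem norm_sum_sq (h : IsRegularEquiangular v α lam) :
    ‖∑ i, v i‖ ^ 2 = Fintype.card ι * lam := by
  rw [← real_inner_self_eq_norm_sq, sum_inner]
  simp [h.inner_sum_eq]

theorem inner_sum_sum_smul (h : IsRegularEquiangular v α lam) (z : ι → ℝ) :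
    ⟪∑ i, v i, ∑ i, z i • v i⟫ = lam * ∑ i, z i := by
  rw [real_inner_comm, sum_inner, Finset.mul_sum]
  simp [real_inner_smul_left, h.inner_sum_eq, mul_comm]

theorem lam_pos [Nonempty ι] (h : IsRegularEquiangular v α lam) (hlam : lam ≠ 0) : 0 < lam := by
  have hc : (0 : ℝ) < Fintype.card ι := by exact_mod_cast Fintype.card_pos
  have : 0 ≤ (Fintype.card ι : ℝ) * lam := h.norm_sum_sq ▸ sq_nonneg _
  exact lt_of_le_of_ne (nonneg_of_mul_nonneg_right (by linarith) hc) hlam.symm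

theorem two_mul_norm_sum_smul_sq_le (h : IsRegularEquiangular v α lam) {z : ι → ℝ}
    (hz : ∑ i, z i = 0) :
    2 * lam * ‖∑ i, z i • v i‖ ^ 2 ≤ (1 - α ^ 2) * Fintype.card ι * ∑ i, z i ^ 2 := by
  set u := ∑ i, v i
  set w := ∑ i, z i • v i
  have hvu : ∀ i, ⟪v i, u⟫ = lam := h.inner_sum_eq
  have hu : ‖u‖ ^ 2 = Fintype.card ι * lam := h.norm_sum_sq
  have huw : ⟪u, w⟫ = 0 := by rw [h.inner_sum_sum_smul, hz, mul_zero]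
  let F : E ⊗[ℝ] E := ∑ i, (z i • v i) ⊗ₜ v i
  let G : E ⊗[ℝ] E := u ⊗ₜ w + w ⊗ₜ u
  have hFF : ⟪F, F⟫ = (1 - α ^ 2) * ∑ i, z i ^ 2 := by
    have : ⟪F, F⟫ = ∑ i, ∑ j, z i * z j * ⟪v i, v j⟫ ^ 2 := by
      simp only [F, sum_inner, inner_sum, TensorProduct.inner_tmul, real_inner_smul_left,
        real_inner_smul_right]
      refine Finset.sum_congr rfl fun i _ => Finset.sum_congr rfl fun j _ => ?_
      rw [real_inner_comm]; ring
    rw [this, sum_sum_mul_mul_eq_of_offDiag (t := fun i j => ⟪v i, v j⟫ ^ 2)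
      (fun i => by rw [h.inner_self_eq_one, one_pow]) fun i j => h.inner_sq_eq, hz]
    ring
  have hFG : ⟪F, G⟫ = 2 * lam * ‖w‖ ^ 2 := by
    have hww : ‖w‖ ^ 2 = ∑ i, z i * ⟪v i, w⟫ := by
      rw [← real_inner_self_eq_norm_sq]
      nth_rewrite 1 [show w = ∑ i, z i • v i from rfl]
      simp only [sum_inner, real_inner_smul_left]
    simp only [F, G, sum_inner, inner_add_right, TensorProduct.inner_tmul, real_inner_smul_left,
      hvu, hww, Finset.mul_sum, ← Finset.sum_add_distrib]
    exact Finset.sum_congr rfl fun i _ => by ring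
  have hGG : ⟪G, G⟫ = Fintype.card ι * (2 * lam * ‖w‖ ^ 2) := by
    simp only [G, inner_add_left, inner_add_right, TensorProduct.inner_tmul, real_inner_comm u w,
      huw, real_inner_self_eq_norm_sq, hu]
    ring
  have hCS := real_inner_mul_inner_self_le F G
  have hF : 0 ≤ ⟪F, F⟫ := real_inner_self_nonneg (x := F)
  rw [hFF, hFG, hGG] at hCS
  rw [hFF] at hF
  have hb : 0 ≤ (1 - α ^ 2) * Fintype.card ι * ∑ i, z i ^ 2 := by
    rw [mul_right_comm]; exact mul_nonneg hF (Nat.cast_nonneg _)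
  nlinarith

theorem two_mul_sum_sq_le_of_inner_eq (h : IsRegularEquiangular v α lam) (hα : α ^ 2 ≤ 1)
    (hlam : 0 ≤ lam) {w : E} {z : ι → ℝ} (hw : ∀ j, ⟪w, v j⟫ = z j) (hz : ∑ j, z j = 0) :
    2 * lam * ∑ j, z j ^ 2 ≤ (1 - α ^ 2) * Fintype.card ι * ‖w‖ ^ 2 := by
  set S := ∑ j, z j ^ 2
  have hS : S = ⟪w, ∑ j, z j • v j⟫ := by
    simp only [S, inner_sum, real_inner_smul_right, hw, sq]
  have hS0 : 0 ≤ S := Finset.sum_nonneg fun j _ => sq_nonneg _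
  have hb : 0 ≤ (1 - α ^ 2) * Fintype.card ι * ‖w‖ ^ 2 := by
    have : 0 ≤ 1 - α ^ 2 := by linarith
    positivity
  have hCS : S * S ≤ ‖w‖ ^ 2 * ‖∑ j, z j • v j‖ ^ 2 := by
    rw [← mul_pow, ← sq]
    exact pow_le_pow_left₀ hS0 (hS ▸ real_inner_le_norm _ _) 2
  have hmul : 2 * lam * S * S ≤ (1 - α ^ 2) * Fintype.card ι * ‖w‖ ^ 2 * S :=
    calc 2 * lam * S * S ≤ 2 * lam * (‖w‖ ^ 2 * ‖∑ j, z j • v j‖ ^ 2) := by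
          rw [mul_assoc]; gcongr
      _ = ‖w‖ ^ 2 * (2 * lam * ‖∑ j, z j • v j‖ ^ 2) := by ring
      _ ≤ ‖w‖ ^ 2 * ((1 - α ^ 2) * Fintype.card ι * S) :=
          mul_le_mul_of_nonneg_left (h.two_mul_norm_sum_smul_sq_le hz) (sq_nonneg _)
      _ = (1 - α ^ 2) * Fintype.card ι * ‖w‖ ^ 2 * S := by ring
  rcases hS0.eq_or_lt with hS0 | hSpos
  · rw [← hS0, mul_zero]; exact hb
  · exact le_of_mul_le_mul_right hmul hSpos

theorem two_mul_sum_sq_inner_sub_le [Nonempty ι] (h : IsRegularEquiangular v α lam)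
    (hα : α ^ 2 ≤ 1) (hlam : 0 ≤ lam) (i : ι) :
    2 * lam * ∑ j, (⟪v i, v j⟫ - lam / Fintype.card ι) ^ 2
      ≤ (1 - α ^ 2) * (Fintype.card ι - lam) := by
  set n : ℝ := (Fintype.card ι : ℝ)
  have hn : n ≠ 0 := by positivity
  set w := v i - n⁻¹ • ∑ j, v j
  have hw : ∀ j, ⟪w, v j⟫ = ⟪v i, v j⟫ - lam / n := by
    intro j
    rw [inner_sub_left, real_inner_smul_left, real_inner_comm (v j) (∑ j, v j), h.inner_sum_eq,
      inv_mul_eq_div]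
  have hz : ∑ j, (⟪v i, v j⟫ - lam / n) = 0 := by
    rw [Finset.sum_sub_distrib, ← inner_sum, h.inner_sum_eq, Finset.sum_const, Finset.card_univ,
      nsmul_eq_mul, mul_div_cancel₀ _ hn, sub_self]
  have hww : ‖w‖ ^ 2 = 1 - lam / n := by
    rw [← real_inner_self_eq_norm_sq]
    nth_rewrite 2 [show w = v i - n⁻¹ • ∑ j, v j from rfl]
    rw [inner_sub_right, real_inner_smul_right, inner_sum, hw, h.inner_self_eq_one]
    simp only [hw, hz, mul_zero, sub_zero]
  have := h.two_mul_sum_sq_le_of_inner_eq hα hlam hw hz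
  rw [hww] at this
  convert this using 1
  field_simp
  ring

theorem sum_sum_sq_inner_sub [Nonempty ι] (h : IsRegularEquiangular v α lam) :
    ∑ i, ∑ j, (⟪v i, v j⟫ - lam / Fintype.card ι) ^ 2
      = Fintype.card ι * (α ^ 2 * Fintype.card ι + 1 - α ^ 2) - lam ^ 2 := by
  set n : ℝ := (Fintype.card ι : ℝ)
  have hn : n ≠ 0 := by positivity
  have hsq : ∑ i, ∑ j, ⟪v i, v j⟫ ^ 2 = α ^ 2 * n ^ 2 + (1 - α ^ 2) * n := by
    have := sum_sum_mul_mul_eq_of_offDiag (t := fun i j => ⟪v i, v j⟫ ^ 2)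
      (fun i => by rw [h.inner_self_eq_one, one_pow]) (fun i j => h.inner_sq_eq) (fun _ => 1)
    simpa [n] using this
  have hrow : ∀ i, ∑ j, ⟪v i, v j⟫ = lam := fun i => by rw [← inner_sum, h.inner_sum_eq]
  simp only [sub_sq, Finset.sum_add_distrib, Finset.sum_sub_distrib, ← Finset.sum_mul,
    ← Finset.mul_sum, hrow, hsq, Finset.sum_const, Finset.card_univ, nsmul_eq_mul]
  field_simp
  ring

theorem sub_le_sq (h : IsRegularEquiangular v α lam) (hα : α ^ 2 ≤ 1) (hlam : lam ≠ 0) :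
    Fintype.card ι * (α ^ 2 * Fintype.card ι + 1 - α ^ 2)
      - (1 - α ^ 2) / 2 * Fintype.card ι * (Fintype.card ι / lam - 1) ≤ lam ^ 2 := by
  rcases isEmpty_or_nonempty ι with hι | hι
  · simp [Fintype.card_eq_zero]
    positivity
  set n : ℝ := (Fintype.card ι : ℝ)
  have hpos := h.lam_pos hlam
  have hrows :
      2 * lam * (n * (α ^ 2 * n + 1 - α ^ 2) - lam ^ 2) ≤ n * ((1 - α ^ 2) * (n - lam)) :=
    calc 2 * lam * (n * (α ^ 2 * n + 1 - α ^ 2) - lam ^ 2)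
        = ∑ i, 2 * lam * ∑ j, (⟪v i, v j⟫ - lam / n) ^ 2 := by
          rw [← Finset.mul_sum, h.sum_sum_sq_inner_sub]
      _ ≤ ∑ _i : ι, (1 - α ^ 2) * (n - lam) :=
          Finset.sum_le_sum fun i _ => h.two_mul_sum_sq_inner_sub_le hα hpos.le i
      _ = n * ((1 - α ^ 2) * (n - lam)) := by simp [n]
  have hdiv :
      (1 - α ^ 2) / 2 * n * (n / lam - 1) = n * ((1 - α ^ 2) * (n - lam)) / (2 * lam) := by
    field_simp
  rw [hdiv, sub_le_iff_le_add, ← sub_le_iff_le_add', le_div_iff₀ (by positivity)]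
  linarith

theorem eigenvalue_le_of_sum_eq_zero (h : IsRegularEquiangular v α lam) (hlam : lam ≠ 0)
    {mu : ℝ} {x : ι → ℝ} (hx : x ≠ 0) (hx1 : ∑ i, x i = 0) (hmu : gram ℝ v *ᵥ x = mu • x) :
    mu ≤ (1 - α ^ 2) * Fintype.card ι / (2 * lam) := by
  obtain ⟨i, hi⟩ := Function.ne_iff.mp hx
  have : Nonempty ι := ⟨i⟩
  have hpos := h.lam_pos hlam
  have hS : 0 < ∑ i, x i ^ 2 :=
    Finset.sum_pos' (fun j _ => sq_nonneg _) ⟨i, Finset.mem_univ i, sq_pos_of_ne_zero hi⟩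
  have hnorm : ‖∑ i, x i • v i‖ ^ 2 = mu * ∑ i, x i ^ 2 := by
    rw [← real_inner_self_eq_norm_sq, ← star_dotProduct_gram_mulVec, hmu]
    simp [dotProduct, Finset.mul_sum, sq, mul_left_comm]
  have key := h.two_mul_norm_sum_smul_sq_le hx1
  rw [hnorm] at key
  rw [le_div_iff₀ (by positivity)]
  exact le_of_mul_le_mul_right (by linear_combination key) hS

end IsRegularEquiangular

/-- For the Gram matrix `M` of a spherical `{α, −α}`-code of size `n` in `ℝ^r` with the
all-ones vector an eigenvector of eigenvalue `lam ≠ 0`: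
(a) `lam² ≥ n(α²n + 1 − α²) − ((1−α²)/2)·n·(n/lam − 1)`, and
(b) any eigenvalue `μ` with eigenvector orthogonal to the all-ones vector satisfies
`μ ≤ (1−α²)n/(2 lam)`. -/
theorem stmt19 (r n : ℕ) (α : ℝ) (hα0 : 0 < α) (hα1 : α < 1)
    (v : Fin n → EuclideanSpace ℝ (Fin r)) (hv : ∀ i, ‖v i‖ = 1)
    (hangle : ∀ i j, i ≠ j → |(inner ℝ (v i) (v j) : ℝ)| = α)
    (M : Matrix (Fin n) (Fin n) ℝ) (hM : ∀ i j, M i j = inner ℝ (v i) (v j))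
    (lam : ℝ) (hlam : lam ≠ 0)
    (hones : M.mulVec (fun _ => 1) = lam • (fun _ => (1 : ℝ))) :
    lam ^ 2 ≥ n * (α ^ 2 * n + 1 - α ^ 2) - (1 - α ^ 2) / 2 * n * (n / lam - 1) ∧
    ∀ (mu : ℝ) (x : Fin n → ℝ), x ≠ 0 → x ⬝ᵥ (fun _ => (1 : ℝ)) = 0 →
      M.mulVec x = mu • x → mu ≤ (1 - α ^ 2) * n / (2 * lam) := by
  have hα : α ^ 2 ≤ 1 := pow_le_one₀ hα0.le hα1.le
  obtain rfl : M = gram ℝ v := Matrix.ext hM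
  have hcode : IsRegularEquiangular v α lam := ⟨hv, hangle, hones⟩
  refine ⟨by simpa using hcode.sub_le_sq hα hlam, fun mu x hx hx1 hmu => ?_⟩
  simpa using hcode.eigenvalue_le_of_sum_eq_zero hlam hx (by simpa [dotProduct] using hx1) hmu
end
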